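/- arXiv:1907.02991 — 6 statements merged into one kernel-verified Lean document; each statement's English description precedes it below -/
import Mathlib

section
/- Let f be a measurable nonnegative function on [0,∞) such that T_{s,k} f(u) = ∫_u^∞ (y-u)^k e^{-s(y-u)} f(y) dy exists and is finite for every s > 0, every nonnegative integer k, and every u ≥ 0. Then for each r ≥ 0, s > 0 and nonnegative integer k, the k-th partial derivative in s of the Laplace transform of T_s f satisfies ∂^k/∂s^k (T_s f)^(r) = (-1)^k (T_{s,k} f)^(r), where (T_{s,k} f)^ denotes the Laplace transform in u of T_{s,k} f. -/
open MeasureTheory Real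

open Set Filter ENNReal

namespace DH

noncomputable def K (f : ℝ → ℝ) (k : ℕ) (t u : ℝ) : ℝ :=
  ∫ y in Ioi u, (y - u) ^ k * Real.exp (-t * (y - u)) * f y

lemma measK (f : ℝ → ℝ) (hmeas : Measurable f) (k : ℕ) (t : ℝ) :
    Measurable (fun u => K f k t u) := by
  have h : ∀ u : ℝ, K f k t u
      = ∫ y, (fun p : ℝ × ℝ => if p.1 < p.2 then
          (p.2 - p.1) ^ k * Real.exp (-t * (p.2 - p.1)) * f p.2 else 0) (u, y) := by
    intro u
    rw [K, ← integral_indicator measurableSet_Ioi]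
    simp only [Set.indicator_apply, Set.mem_Ioi]
  simp_rw [h]
  have hF : StronglyMeasurable (fun p : ℝ × ℝ => if p.1 < p.2 then
      (p.2 - p.1) ^ k * Real.exp (-t * (p.2 - p.1)) * f p.2 else 0) := by
    apply Measurable.stronglyMeasurable
    refine Measurable.ite (measurableSet_lt measurable_fst measurable_snd) ?_ measurable_const
    exact (((measurable_snd.sub measurable_fst).pow_const k).mul
      (((measurable_snd.sub measurable_fst).const_mul (-t)).exp)).mul (hmeas.comp measurable_snd)
  exact hF.integral_prod_right'.measurable

lemma Knonneg (f : ℝ → ℝ) (hnn : ∀ x, 0 ≤ x → 0 ≤ f x) (k : ℕ) (t : ℝ) {u : ℝ} (hu : 0 ≤ u) :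
    0 ≤ K f k t u := by
  apply setIntegral_nonneg measurableSet_Ioi
  intro y hy
  have h1 : 0 ≤ y - u := by simp only [Set.mem_Ioi] at hy; linarith
  have h2 : 0 ≤ f y := hnn y (by linarith [Set.mem_Ioi.mp hy])
  positivity


lemma Kmono (f : ℝ → ℝ) (hnn : ∀ x, 0 ≤ x → 0 ≤ f x)
    (hint : ∀ s : ℝ, 0 < s → ∀ k : ℕ, ∀ u : ℝ, 0 ≤ u →
      IntegrableOn (fun y => (y - u) ^ k * Real.exp (-s * (y - u)) * f y) (Set.Ioi u))
    (k : ℕ) {t t' u : ℝ} (hu : 0 ≤ u) (ht : 0 < t) (htt : t ≤ t') :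
    K f k t' u ≤ K f k t u := by
  apply setIntegral_mono_on (hint t' (lt_of_lt_of_le ht htt) k u hu) (hint t ht k u hu)
    measurableSet_Ioi
  intro y hy
  have h1 : 0 ≤ y - u := by simp only [Set.mem_Ioi] at hy; linarith
  have h2 : 0 ≤ f y := hnn y (by linarith [Set.mem_Ioi.mp hy])
  have h3 : Real.exp (-t' * (y - u)) ≤ Real.exp (-t * (y - u)) := by
    apply Real.exp_le_exp.2; nlinarith
  have h4 : (0:ℝ) ≤ (y - u) ^ k := pow_nonneg h1 k
  exact mul_le_mul_of_nonneg_right (mul_le_mul_of_nonneg_left h3 h4) h2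

lemma pow_mul_exp_le (k : ℕ) {d x : ℝ} (hd : 0 < d) (hx : 0 ≤ x) :
    x ^ k ≤ (k.factorial : ℝ) * (2 / d) ^ k * Real.exp (d / 2 * x) := by
  have h := Real.pow_div_factorial_le_exp (x := d / 2 * x) (by positivity) k
  have hkf : (0:ℝ) < (k.factorial : ℝ) := by positivity
  rw [div_le_iff₀ hkf] at h
  have hx' : x ^ k = (d / 2 * x) ^ k * (2 / d) ^ k := by
    rw [← mul_pow]; congr 1; field_simp
  rw [hx']
  calc (d / 2 * x) ^ k * (2 / d) ^ k
      ≤ (Real.exp (d / 2 * x) * (k.factorial : ℝ)) * (2 / d) ^ k := by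
        apply mul_le_mul_of_nonneg_right h (by positivity)
    _ = (k.factorial : ℝ) * (2 / d) ^ k * Real.exp (d / 2 * x) := by ring

lemma K_le (f : ℝ → ℝ) (hnn : ∀ x, 0 ≤ x → 0 ≤ f x)
    (hint : ∀ s : ℝ, 0 < s → ∀ k : ℕ, ∀ u : ℝ, 0 ≤ u →
      IntegrableOn (fun y => (y - u) ^ k * Real.exp (-s * (y - u)) * f y) (Set.Ioi u))
    (k : ℕ) {t0 t u : ℝ} (hu : 0 ≤ u) (ht0 : 0 < t0) (ht : t0 < t) :
    K f k t u ≤ (k.factorial : ℝ) * (2 / (t - t0)) ^ k * K f 0 t0 u := by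
  have hd : (0:ℝ) < t - t0 := by linarith
  have hC : (0:ℝ) ≤ (k.factorial : ℝ) * (2 / (t - t0)) ^ k := by positivity
  rw [K, K, ← integral_const_mul]
  apply setIntegral_mono_on (hint t (ht0.trans ht) k u hu)
    (((hint t0 ht0 0 u hu).const_mul _)) measurableSet_Ioi
  intro y hy
  have h1 : 0 ≤ y - u := by simp only [Set.mem_Ioi] at hy; linarith
  have h2 : 0 ≤ f y := hnn y (by linarith [Set.mem_Ioi.mp hy])
  have hb := pow_mul_exp_le k (d := t - t0) (by linarith) h1
  have key : (y - u) ^ k * Real.exp (-t * (y - u))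
      ≤ (k.factorial : ℝ) * (2 / (t - t0)) ^ k * Real.exp (-t0 * (y - u)) := by
    have e1 : Real.exp ((t - t0) / 2 * (y - u)) * Real.exp (-t * (y - u))
        = Real.exp (-((t+t0)/2) * (y - u)) := by
      rw [← Real.exp_add]; ring_nf
    calc (y - u) ^ k * Real.exp (-t * (y - u))
        ≤ ((k.factorial : ℝ) * (2 / (t - t0)) ^ k * Real.exp ((t - t0) / 2 * (y - u)))
            * Real.exp (-t * (y - u)) :=
          mul_le_mul_of_nonneg_right hb (Real.exp_pos _).le
      _ = (k.factorial : ℝ) * (2 / (t - t0)) ^ k * Real.exp (-((t+t0)/2) * (y - u)) := by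
          rw [mul_assoc, e1]
      _ ≤ (k.factorial : ℝ) * (2 / (t - t0)) ^ k * Real.exp (-t0 * (y - u)) := by
          apply mul_le_mul_of_nonneg_left _ hC
          apply Real.exp_le_exp.2; nlinarith
  calc (y - u) ^ k * Real.exp (-t * (y - u)) * f y
      ≤ ((k.factorial : ℝ) * (2 / (t - t0)) ^ k * Real.exp (-t0 * (y - u))) * f y :=
        mul_le_mul_of_nonneg_right key h2
    _ = (k.factorial : ℝ) * (2 / (t - t0)) ^ k * ((y - u) ^ 0 * Real.exp (-t0 * (y - u)) * f y) := by
        ring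

lemma hasDerivAt_K (f : ℝ → ℝ) (hmeas : Measurable f) (hnn : ∀ x, 0 ≤ x → 0 ≤ f x)
    (hint : ∀ s : ℝ, 0 < s → ∀ k : ℕ, ∀ u : ℝ, 0 ≤ u →
      IntegrableOn (fun y => (y - u) ^ k * Real.exp (-s * (y - u)) * f y) (Set.Ioi u))
    (k : ℕ) {t u : ℝ} (hu : 0 ≤ u) (ht : 0 < t) :
    HasDerivAt (fun t => K f k t u) (-K f (k+1) t u) t := by
  have key := hasDerivAt_integral_of_dominated_loc_of_deriv_le
    (F := fun τ y => (y - u) ^ k * Real.exp (-τ * (y - u)) * f y)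
    (F' := fun τ y => -((y - u) ^ (k+1) * Real.exp (-τ * (y - u)) * f y))
    (bound := fun y => (y - u) ^ (k+1) * Real.exp (-(t/2) * (y - u)) * f y)
    (μ := volume.restrict (Set.Ioi u)) (x₀ := t) (Metric.ball_mem_nhds t (half_pos ht))
    ?_ (hint t ht k u hu) ?_ ?_ (hint (t/2) (half_pos ht) (k+1) u hu) ?_
  · have h2' := key.2
    rw [integral_neg] at h2'
    exact h2'
  · filter_upwards with τ
    exact ((((measurable_id.sub_const u).pow_const k).mul
      (((measurable_id.sub_const u).const_mul (-τ)).exp)).mul hmeas).aestronglyMeasurable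
  · exact ((((measurable_id.sub_const u).pow_const (k+1)).mul
      (((measurable_id.sub_const u).const_mul (-t)).exp)).mul hmeas).neg.aestronglyMeasurable
  · rw [ae_restrict_iff' measurableSet_Ioi]
    filter_upwards with y hy
    intro τ hτ
    have h1 : 0 ≤ y - u := by simp only [Set.mem_Ioi] at hy; linarith
    have h2 : 0 ≤ f y := hnn y (by linarith [Set.mem_Ioi.mp hy])
    have hτ2 : t/2 ≤ τ := by
      rw [Metric.mem_ball, Real.dist_eq, abs_lt] at hτ; linarith
    rw [norm_neg, Real.norm_eq_abs, abs_of_nonneg (by positivity)]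
    have h3 : Real.exp (-τ * (y - u)) ≤ Real.exp (-(t/2) * (y - u)) := by
      apply Real.exp_le_exp.2; nlinarith
    exact mul_le_mul_of_nonneg_right
      (mul_le_mul_of_nonneg_left h3 (pow_nonneg h1 _)) h2
  · rw [ae_restrict_iff' measurableSet_Ioi]
    filter_upwards with y hy
    intro τ hτ
    have hD : HasDerivAt (fun τ : ℝ => Real.exp (-τ * (y - u)))
        (-(y - u) * Real.exp (-τ * (y - u))) τ := by
      have : HasDerivAt (fun τ : ℝ => -τ * (y - u)) (-(y - u)) τ := by
        simpa using ((hasDerivAt_id τ).neg.mul_const (y - u))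
      simpa [mul_comm] using this.exp
    have := (hD.const_mul ((y - u) ^ k)).mul_const (f y)
    exact this.congr_deriv (by ring)


noncomputable def g (f : ℝ → ℝ) (r : ℝ) (k : ℕ) (t : ℝ) : ℝ :=
  ∫ u in Ioi (0:ℝ), Real.exp (-r * u) * K f k t u

lemma outer_meas (f : ℝ → ℝ) (hmeas : Measurable f) (r : ℝ) (k : ℕ) (t : ℝ) :
    Measurable (fun u => Real.exp (-r * u) * K f k t u) :=
  ((measurable_id.const_mul (-r)).exp).mul (measK f hmeas k t)

lemma outer_int (f : ℝ → ℝ) (hmeas : Measurable f) (hnn : ∀ x, 0 ≤ x → 0 ≤ f x)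
    (hint : ∀ s : ℝ, 0 < s → ∀ k : ℕ, ∀ u : ℝ, 0 ≤ u →
      IntegrableOn (fun y => (y - u) ^ k * Real.exp (-s * (y - u)) * f y) (Set.Ioi u))
    (r : ℝ) {t0 : ℝ} (ht0 : 0 < t0)
    (hg0 : IntegrableOn (fun u => Real.exp (-r * u) * K f 0 t0 u) (Ioi (0:ℝ)))
    (k : ℕ) {t : ℝ} (ht : t0 < t) :
    IntegrableOn (fun u => Real.exp (-r * u) * K f k t u) (Ioi (0:ℝ)) := by
  set C : ℝ := (k.factorial : ℝ) * (2 / (t - t0)) ^ k with hCdef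
  have hC : 0 ≤ C := by
    have : (0:ℝ) < t - t0 := by linarith
    positivity
  apply Integrable.mono (hg0.const_mul C)
    (outer_meas f hmeas r k t).aestronglyMeasurable
  rw [ae_restrict_iff' measurableSet_Ioi]
  filter_upwards with u hu
  have hu0 : (0:ℝ) ≤ u := (Set.mem_Ioi.mp hu).le
  rw [Real.norm_eq_abs, Real.norm_eq_abs]
  have h1 : 0 ≤ K f k t u := Knonneg f hnn k t hu0
  have h0 : 0 ≤ K f 0 t0 u := Knonneg f hnn 0 t0 hu0
  have he : 0 < Real.exp (-r * u) := Real.exp_pos _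
  rw [abs_of_nonneg (by positivity), abs_of_nonneg (by positivity)]
  calc Real.exp (-r * u) * K f k t u ≤ Real.exp (-r * u) * (C * K f 0 t0 u) :=
        mul_le_mul_of_nonneg_left (K_le f hnn hint k hu0 ht0 ht) he.le
    _ = C * (Real.exp (-r * u) * K f 0 t0 u) := by ring

lemma hasDerivAt_g (f : ℝ → ℝ) (hmeas : Measurable f) (hnn : ∀ x, 0 ≤ x → 0 ≤ f x)
    (hint : ∀ s : ℝ, 0 < s → ∀ k : ℕ, ∀ u : ℝ, 0 ≤ u →
      IntegrableOn (fun y => (y - u) ^ k * Real.exp (-s * (y - u)) * f y) (Set.Ioi u))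
    (r : ℝ) {t0 : ℝ} (ht0 : 0 < t0)
    (hg0 : IntegrableOn (fun u => Real.exp (-r * u) * K f 0 t0 u) (Ioi (0:ℝ)))
    (k : ℕ) {t : ℝ} (ht : t0 < t) :
    HasDerivAt (g f r k) (-g f r (k+1) t) t := by
  have hm : t0 < (t + t0) / 2 := by linarith
  have hm0 : 0 < (t + t0) / 2 := by linarith
  have hε : (0:ℝ) < (t - t0) / 2 := by linarith
  have key := hasDerivAt_integral_of_dominated_loc_of_deriv_le
    (F := fun τ u => Real.exp (-r * u) * K f k τ u)
    (F' := fun τ u => -(Real.exp (-r * u) * K f (k+1) τ u))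
    (bound := fun u => Real.exp (-r * u) * K f (k+1) ((t + t0) / 2) u)
    (μ := volume.restrict (Set.Ioi 0)) (x₀ := t) (Metric.ball_mem_nhds t hε)
    (Filter.Eventually.of_forall fun τ =>
      (outer_meas f hmeas r k τ).aestronglyMeasurable)
    (outer_int f hmeas hnn hint r ht0 hg0 k ht)
    ((outer_meas f hmeas r (k+1) t).neg.aestronglyMeasurable)
    ?_ (outer_int f hmeas hnn hint r ht0 hg0 (k+1) hm) ?_
  · have h2' := key.2
    rw [integral_neg] at h2'
    exact h2'
  · rw [ae_restrict_iff' measurableSet_Ioi]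
    filter_upwards with u hu
    intro τ hτ
    have hu0 : (0:ℝ) ≤ u := (Set.mem_Ioi.mp hu).le
    have hτm : (t + t0) / 2 ≤ τ := by
      rw [Metric.mem_ball, Real.dist_eq, abs_lt] at hτ; linarith
    have h1 : 0 ≤ K f (k+1) τ u := Knonneg f hnn _ τ hu0
    have he : 0 < Real.exp (-r * u) := Real.exp_pos _
    rw [norm_neg, Real.norm_eq_abs, abs_of_nonneg (by positivity)]
    exact mul_le_mul_of_nonneg_left (Kmono f hnn hint (k+1) hu0 hm0 hτm) he.le
  · rw [ae_restrict_iff' measurableSet_Ioi]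
    filter_upwards with u hu
    intro τ hτ
    have hu0 : (0:ℝ) ≤ u := (Set.mem_Ioi.mp hu).le
    have hτm : (t + t0) / 2 ≤ τ := by
      rw [Metric.mem_ball, Real.dist_eq, abs_lt] at hτ; linarith
    have hτ0 : 0 < τ := lt_of_lt_of_le hm0 hτm
    have := (hasDerivAt_K f hmeas hnn hint k hu0 hτ0).const_mul (Real.exp (-r * u))
    exact this.congr_deriv (by ring)

lemma iter_deriv_g (f : ℝ → ℝ) (hmeas : Measurable f) (hnn : ∀ x, 0 ≤ x → 0 ≤ f x)
    (hint : ∀ s : ℝ, 0 < s → ∀ k : ℕ, ∀ u : ℝ, 0 ≤ u →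
      IntegrableOn (fun y => (y - u) ^ k * Real.exp (-s * (y - u)) * f y) (Set.Ioi u))
    (r : ℝ) {t0 : ℝ} (ht0 : 0 < t0)
    (hg0 : IntegrableOn (fun u => Real.exp (-r * u) * K f 0 t0 u) (Ioi (0:ℝ)))
    (k : ℕ) : ∀ t : ℝ, t0 < t → iteratedDeriv k (g f r 0) t = (-1) ^ k * g f r k t := by
  induction k with
  | zero => intro t ht; simp [iteratedDeriv_zero]
  | succ k ih =>
    intro t ht
    rw [iteratedDeriv_succ]
    have hev : iteratedDeriv k (g f r 0) =ᶠ[nhds t] fun τ => (-1) ^ k * g f r k τ := by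
      filter_upwards [Ioi_mem_nhds ht] with τ hτ
      exact ih τ hτ
    rw [hev.deriv_eq]
    have hd := (hasDerivAt_g f hmeas hnn hint r ht0 hg0 k ht).const_mul ((-1 : ℝ) ^ k)
    rw [hd.deriv]
    ring


lemma lint_eq (f : ℝ → ℝ) (hmeas : Measurable f) (hnn : ∀ x, 0 ≤ x → 0 ≤ f x)
    (hint : ∀ s : ℝ, 0 < s → ∀ k : ℕ, ∀ u : ℝ, 0 ≤ u →
      IntegrableOn (fun y => (y - u) ^ k * Real.exp (-s * (y - u)) * f y) (Set.Ioi u))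
    (r : ℝ) (k : ℕ) {t : ℝ} (ht : 0 < t) :
    ∫⁻ u in Ioi (0:ℝ), ENNReal.ofReal (Real.exp (-r * u) * K f k t u)
    = ∫⁻ y in Ioi (0:ℝ),
        (∫⁻ u in Ioo (0:ℝ) y, ENNReal.ofReal
          (Real.exp (-r * u) * ((y - u) ^ k * Real.exp (-t * (y - u)))))
        * ENNReal.ofReal (f y) := by
  set G : ℝ → ℝ → ℝ≥0∞ := fun u y =>
    ENNReal.ofReal (Real.exp (-r * u) * ((y - u) ^ k * Real.exp (-t * (y - u)) * f y)) with hG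
  have step1 : ∀ u ∈ Ioi (0:ℝ), ENNReal.ofReal (Real.exp (-r * u) * K f k t u)
      = ∫⁻ y in Ioi u, G u y := by
    intro u hu
    have hu0 : (0:ℝ) ≤ u := (Set.mem_Ioi.mp hu).le
    have h1 : Real.exp (-r * u) * K f k t u
        = ∫ y in Ioi u, Real.exp (-r * u)
            * ((y - u) ^ k * Real.exp (-t * (y - u)) * f y) := by
      rw [K, ← integral_const_mul]
    rw [h1, ofReal_integral_eq_lintegral_ofReal ((hint t ht k u hu0).const_mul _)]
    refine (ae_restrict_iff' measurableSet_Ioi).2 ?_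
    filter_upwards with y hy
    have h1 : 0 ≤ y - u := by simp only [Set.mem_Ioi] at hy; linarith
    have h2 : 0 ≤ f y := hnn y (by linarith [Set.mem_Ioi.mp hy])
    positivity
  rw [setLIntegral_congr_fun measurableSet_Ioi step1]
  set Φ : ℝ × ℝ → ℝ≥0∞ := fun p =>
    if 0 < p.1 ∧ p.1 < p.2 then ENNReal.ofReal (Real.exp (-r * p.1)
      * ((p.2 - p.1) ^ k * Real.exp (-t * (p.2 - p.1)) * f p.2)) else 0 with hΦ
  have hΦm : Measurable Φ := by
    refine Measurable.ite ?_ ?_ measurable_const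
    · exact (measurableSet_lt measurable_const measurable_fst).inter
        (measurableSet_lt measurable_fst measurable_snd)
    · apply ENNReal.measurable_ofReal.comp
      exact (((measurable_fst.const_mul (-r)).exp).mul
        ((((measurable_snd.sub measurable_fst).pow_const k).mul
          (((measurable_snd.sub measurable_fst).const_mul (-t)).exp)).mul
          (hmeas.comp measurable_snd)))
  have e1 : ∫⁻ u in Ioi (0:ℝ), ∫⁻ y in Ioi u, G u y
      = ∫⁻ u, ∫⁻ y, Φ (u, y) := by
    rw [← lintegral_indicator measurableSet_Ioi]
    congr 1
    ext u
    by_cases hu : 0 < u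
    · rw [Set.indicator_of_mem (Set.mem_Ioi.mpr hu), ← lintegral_indicator measurableSet_Ioi]
      congr 1
      ext y
      rw [Set.indicator_apply, hΦ]
      simp only [Set.mem_Ioi]
      by_cases hy : u < y
      · rw [if_pos hy, if_pos (⟨hu, hy⟩ : 0 < u ∧ u < y), hG]
      · rw [if_neg hy, if_neg (by tauto)]
    · rw [Set.indicator_of_notMem (by simpa using hu)]
      symm
      have : ∀ y : ℝ, Φ (u, y) = 0 := by
        intro y
        rw [hΦ]
        simp only []
        rw [if_neg]
        rintro ⟨h1, -⟩
        exact hu h1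
      simp_rw [this]
      exact lintegral_zero
  have e2 : ∫⁻ u, ∫⁻ y, Φ (u, y) = ∫⁻ y, ∫⁻ u, Φ (u, y) :=
    lintegral_lintegral_swap hΦm.aemeasurable
  have e3 : ∫⁻ y, ∫⁻ u, Φ (u, y)
      = ∫⁻ y in Ioi (0:ℝ), ∫⁻ u in Ioo (0:ℝ) y, G u y := by
    rw [← lintegral_indicator measurableSet_Ioi]
    congr 1
    ext y
    by_cases hy : 0 < y
    · rw [Set.indicator_of_mem (Set.mem_Ioi.mpr hy), ← lintegral_indicator measurableSet_Ioo]
      congr 1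
      ext u
      rw [Set.indicator_apply, hΦ]
      simp only [Set.mem_Ioo]
      rfl
    · rw [Set.indicator_of_notMem (by simpa using hy)]
      have : ∀ u : ℝ, Φ (u, y) = 0 := by
        intro u
        rw [hΦ]
        simp only []
        rw [if_neg]
        rintro ⟨h1, h2⟩
        exact hy (lt_trans h1 h2)
      simp_rw [this]
      exact lintegral_zero
  rw [e1, e2, e3]
  apply setLIntegral_congr_fun measurableSet_Ioi
  intro y hy
  beta_reduce
  rw [← lintegral_mul_const' _ _ ENNReal.ofReal_ne_top]
  apply setLIntegral_congr_fun measurableSet_Ioo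
  intro u hu
  have h1 : (0:ℝ) ≤ y - u := by
    have := hu.2; linarith
  have hfy : 0 ≤ f y := hnn y (Set.mem_Ioi.mp hy).le
  have h2 : Real.exp (-r * u) * ((y - u) ^ k * Real.exp (-t * (y - u)) * f y)
      = (Real.exp (-r * u) * ((y - u) ^ k * Real.exp (-t * (y - u)))) * f y := by ring
  rw [hG]
  simp only []
  rw [h2, ENNReal.ofReal_mul]
  exact mul_nonneg (Real.exp_pos _).le (mul_nonneg (pow_nonneg h1 k) (Real.exp_pos _).le)


lemma outer_nonneg (f : ℝ → ℝ) (hnn : ∀ x, 0 ≤ x → 0 ≤ f x) (r : ℝ) (k : ℕ) (t : ℝ) :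
    0 ≤ᵐ[volume.restrict (Ioi (0:ℝ))] fun u => Real.exp (-r * u) * K f k t u := by
  refine (ae_restrict_iff' measurableSet_Ioi).2 ?_
  filter_upwards with u hu
  exact mul_nonneg (Real.exp_pos _).le (Knonneg f hnn k t (Set.mem_Ioi.mp hu).le)

lemma outer_lint_iff (f : ℝ → ℝ) (hmeas : Measurable f) (hnn : ∀ x, 0 ≤ x → 0 ≤ f x)
    (r : ℝ) (k : ℕ) (t : ℝ) :
    ∫⁻ u in Ioi (0:ℝ), ENNReal.ofReal (Real.exp (-r * u) * K f k t u) ≠ ∞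
    ↔ IntegrableOn (fun u => Real.exp (-r * u) * K f k t u) (Ioi (0:ℝ)) :=
  lintegral_ofReal_ne_top_iff_integrable
    (outer_meas f hmeas r k t).aestronglyMeasurable (outer_nonneg f hnn r k t)

lemma rpos_lint_ne_top (f : ℝ → ℝ) (hmeas : Measurable f) (hnn : ∀ x, 0 ≤ x → 0 ≤ f x)
    (hint : ∀ s : ℝ, 0 < s → ∀ k : ℕ, ∀ u : ℝ, 0 ≤ u →
      IntegrableOn (fun y => (y - u) ^ k * Real.exp (-s * (y - u)) * f y) (Set.Ioi u))
    {r : ℝ} (hr : 0 < r) {t : ℝ} (ht : 0 < t) :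
    ∫⁻ u in Ioi (0:ℝ), ENNReal.ofReal (Real.exp (-r * u) * K f 0 t u) ≠ ∞ := by
  rw [lint_eq f hmeas hnn hint r 0 ht]
  set m : ℝ := min r t with hm
  have hm0 : 0 < m := lt_min hr ht
  have hb : ∫⁻ y in Ioi (0:ℝ),
      (∫⁻ u in Ioo (0:ℝ) y, ENNReal.ofReal
        (Real.exp (-r * u) * ((y - u) ^ 0 * Real.exp (-t * (y - u)))))
      * ENNReal.ofReal (f y)
      ≤ ∫⁻ y in Ioi (0:ℝ), ENNReal.ofReal ((y - 0) ^ 1 * Real.exp (-m * (y - 0)) * f y) := by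
    apply lintegral_mono_ae
    refine (ae_restrict_iff' measurableSet_Ioi).2 ?_
    filter_upwards with y hy
    have hy0 : (0:ℝ) < y := Set.mem_Ioi.mp hy
    have hfy : 0 ≤ f y := hnn y hy0.le
    have hin : (∫⁻ u in Ioo (0:ℝ) y, ENNReal.ofReal
        (Real.exp (-r * u) * ((y - u) ^ 0 * Real.exp (-t * (y - u)))))
        ≤ ENNReal.ofReal (Real.exp (-m * y)) * ENNReal.ofReal y := by
      calc ∫⁻ u in Ioo (0:ℝ) y, ENNReal.ofReal
            (Real.exp (-r * u) * ((y - u) ^ 0 * Real.exp (-t * (y - u))))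
          ≤ ∫⁻ _ in Ioo (0:ℝ) y, ENNReal.ofReal (Real.exp (-m * y)) := by
            apply lintegral_mono_ae
            refine (ae_restrict_iff' measurableSet_Ioo).2 ?_
            filter_upwards with u hu
            apply ENNReal.ofReal_le_ofReal
            rw [pow_zero, one_mul, ← Real.exp_add]
            apply Real.exp_le_exp.2
            have h1 : m ≤ r := min_le_left _ _
            have h2 : m ≤ t := min_le_right _ _
            have h3 : 0 < u := hu.1
            have h4 : u < y := hu.2
            nlinarith
        _ = ENNReal.ofReal (Real.exp (-m * y)) * ENNReal.ofReal y := by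
            rw [setLIntegral_const, Real.volume_Ioo]
            norm_num
    calc (∫⁻ u in Ioo (0:ℝ) y, ENNReal.ofReal
          (Real.exp (-r * u) * ((y - u) ^ 0 * Real.exp (-t * (y - u)))))
          * ENNReal.ofReal (f y)
        ≤ (ENNReal.ofReal (Real.exp (-m * y)) * ENNReal.ofReal y) * ENNReal.ofReal (f y) :=
          mul_le_mul_left hin _
      _ = ENNReal.ofReal ((y - 0) ^ 1 * Real.exp (-m * (y - 0)) * f y) := by
          rw [← ENNReal.ofReal_mul (by positivity), ← ENNReal.ofReal_mul (by positivity)]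
          congr 1
          rw [sub_zero, pow_one]
          ring
  apply ne_top_of_le_ne_top _ hb
  refine (lintegral_ofReal_ne_top_iff_integrable ?_ ?_).2 (hint m hm0 1 0 le_rfl)
  · exact (((measurable_id.sub_const 0).pow_const 1).mul
      (((measurable_id.sub_const 0).const_mul (-m)).exp)).mul hmeas |>.aestronglyMeasurable
  · refine (ae_restrict_iff' measurableSet_Ioi).2 ?_
    filter_upwards with y hy
    have hy0 : (0:ℝ) < y := Set.mem_Ioi.mp hy
    have hfy : 0 ≤ f y := hnn y hy0.le
    have : (0:ℝ) ≤ y - 0 := by linarith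
    positivity


lemma lint0_ne_top (f : ℝ → ℝ) (hmeas : Measurable f) (hnn : ∀ x, 0 ≤ x → 0 ≤ f x)
    (hint : ∀ s : ℝ, 0 < s → ∀ k : ℕ, ∀ u : ℝ, 0 ≤ u →
      IntegrableOn (fun y => (y - u) ^ k * Real.exp (-s * (y - u)) * f y) (Set.Ioi u))
    (hL : ∫⁻ y in Ioi (0:ℝ), ENNReal.ofReal (f y) ≠ ∞) {t : ℝ} (ht : 0 < t) :
    ∫⁻ u in Ioi (0:ℝ), ENNReal.ofReal (Real.exp (-0 * u) * K f 0 t u) ≠ ∞ := by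
  rw [lint_eq f hmeas hnn hint 0 0 ht]
  have key : ∀ y ∈ Ioi (0:ℝ),
      (∫⁻ u in Ioo (0:ℝ) y, ENNReal.ofReal
        (Real.exp (-0 * u) * ((y - u) ^ 0 * Real.exp (-t * (y - u)))))
      ≤ ENNReal.ofReal (1 / t) := by
    intro y hy
    have hy0 : (0:ℝ) < y := Set.mem_Ioi.mp hy
    have hsim : ∀ u : ℝ, Real.exp (-0 * u) * ((y - u) ^ 0 * Real.exp (-t * (y - u)))
        = Real.exp (-t * (y - u)) := by
      intro u; simp
    simp_rw [hsim]
    have hc : Continuous fun u : ℝ => Real.exp (-t * (y - u)) := by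
      apply Real.continuous_exp.comp
      exact continuous_const.mul (continuous_const.sub continuous_id)
    have hI : IntegrableOn (fun u : ℝ => Real.exp (-t * (y - u))) (Ioo 0 y) :=
      (hc.integrableOn_Icc (a := 0) (b := y)).mono_set Ioo_subset_Icc_self
    rw [← ofReal_integral_eq_lintegral_ofReal hI
      (Filter.Eventually.of_forall fun u => (Real.exp_pos _).le)]
    apply ENNReal.ofReal_le_ofReal
    have e1 : ∫ u in Ioo (0:ℝ) y, Real.exp (-t * (y - u))
        = ∫ u in (0:ℝ)..y, Real.exp (-t * (y - u)) := by
      rw [intervalIntegral.integral_of_le hy0.le, integral_Ioc_eq_integral_Ioo]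
    have e2 : ∫ u in (0:ℝ)..y, Real.exp (-t * (y - u))
        = ∫ x in (0:ℝ)..y, Real.exp (-t * x) := by
      have := intervalIntegral.integral_comp_sub_left (a := (0:ℝ)) (b := y)
        (fun x => Real.exp (-t * x)) y
      simpa using this
    have e3 : ∫ x in (0:ℝ)..y, Real.exp (-t * x)
        = (-t)⁻¹ * (Real.exp (-t * y) - 1) := by
      have := intervalIntegral.integral_comp_mul_left (a := (0:ℝ)) (b := y)
        (fun x => Real.exp x) (c := -t) (by intro h; rw [neg_eq_zero] at h; exact ht.ne' h)
      simp only [mul_zero, integral_exp, Real.exp_zero, smul_eq_mul] at this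
      simpa using this
    rw [e1, e2, e3]
    have h1 : (-t)⁻¹ * (Real.exp (-t * y) - 1) = (1 - Real.exp (-t * y)) / t := by
      rw [div_eq_mul_inv, ← neg_inv]
      ring
    rw [h1, one_div]
    rw [div_le_iff₀ ht, inv_mul_cancel₀ ht.ne']
    have := Real.exp_pos (-t * y)
    linarith
  have hb : ∫⁻ y in Ioi (0:ℝ),
      (∫⁻ u in Ioo (0:ℝ) y, ENNReal.ofReal
        (Real.exp (-0 * u) * ((y - u) ^ 0 * Real.exp (-t * (y - u)))))
      * ENNReal.ofReal (f y)
      ≤ ENNReal.ofReal (1 / t) * ∫⁻ y in Ioi (0:ℝ), ENNReal.ofReal (f y) := by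
    rw [← lintegral_const_mul' _ _ ENNReal.ofReal_ne_top]
    apply lintegral_mono_ae
    refine (ae_restrict_iff' measurableSet_Ioi).2 ?_
    filter_upwards with y hy
    exact mul_le_mul_left (key y hy) _
  exact ne_top_of_le_ne_top (ENNReal.mul_ne_top ENNReal.ofReal_ne_top hL) hb

lemma lint_eq_top (f : ℝ → ℝ) (hmeas : Measurable f) (hnn : ∀ x, 0 ≤ x → 0 ≤ f x)
    (hint : ∀ s : ℝ, 0 < s → ∀ k : ℕ, ∀ u : ℝ, 0 ≤ u →
      IntegrableOn (fun y => (y - u) ^ k * Real.exp (-s * (y - u)) * f y) (Set.Ioi u))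
    (hL : ∫⁻ y in Ioi (0:ℝ), ENNReal.ofReal (f y) = ∞) (k : ℕ) {t : ℝ} (ht : 0 < t) :
    ∫⁻ u in Ioi (0:ℝ), ENNReal.ofReal (Real.exp (-0 * u) * K f k t u) = ∞ := by
  have hIoc : ∫⁻ y in Ioc (0:ℝ) 1, ENNReal.ofReal (f y) ≠ ∞ := by
    have hint1 := (hint 1 one_pos 0 0 le_rfl).mono_set (Set.Ioc_subset_Ioi_self : Ioc (0:ℝ) 1 ⊆ Ioi 0)
    have hfI : IntegrableOn f (Ioc (0:ℝ) 1) := by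
      apply Integrable.mono (hint1.const_mul (Real.exp 1)) hmeas.aestronglyMeasurable
      refine (ae_restrict_iff' measurableSet_Ioc).2 ?_
      filter_upwards with y hy
      have h0 : (0:ℝ) < y := hy.1
      have h1 : y ≤ 1 := hy.2
      have hfy : 0 ≤ f y := hnn y h0.le
      rw [Real.norm_eq_abs, Real.norm_eq_abs, abs_of_nonneg hfy, abs_of_nonneg (by positivity)]
      have he : (1:ℝ) ≤ Real.exp 1 * Real.exp (-1 * (y - 0)) := by
        rw [← Real.exp_add]
        have : (0:ℝ) ≤ 1 + -1 * (y - 0) := by linarith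
        calc (1:ℝ) = Real.exp 0 := Real.exp_zero.symm
          _ ≤ _ := Real.exp_le_exp.2 this
      calc f y = 1 * f y := (one_mul _).symm
        _ ≤ (Real.exp 1 * Real.exp (-1 * (y - 0))) * f y :=
            mul_le_mul_of_nonneg_right he hfy
        _ = Real.exp 1 * ((y - 0) ^ 0 * Real.exp (-1 * (y - 0)) * f y) := by
            rw [pow_zero]; ring
    refine (lintegral_ofReal_ne_top_iff_integrable hmeas.aestronglyMeasurable ?_).2 hfI
    refine (ae_restrict_iff' measurableSet_Ioc).2 ?_
    filter_upwards with y hy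
    exact hnn y hy.1.le
  have hIoi1 : ∫⁻ y in Ioi (1:ℝ), ENNReal.ofReal (f y) = ∞ := by
    have hsplit : Ioc (0:ℝ) 1 ∪ Ioi (1:ℝ) = Ioi (0:ℝ) := Ioc_union_Ioi_eq_Ioi zero_le_one
    rw [← hsplit, lintegral_union measurableSet_Ioi Ioc_disjoint_Ioi_same] at hL
    rcases ENNReal.add_eq_top.1 hL with h | h
    · exact absurd h hIoc
    · exact h
  rw [lint_eq f hmeas hnn hint 0 k ht]
  set c0 : ℝ≥0∞ := ENNReal.ofReal ((2⁻¹ : ℝ) ^ k * Real.exp (-t)) with hc0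
  have hc0pos : c0 ≠ 0 := by
    rw [hc0]
    simp only [ne_eq, ENNReal.ofReal_eq_zero, not_le]
    positivity
  have key : ∀ y ∈ Ioi (1:ℝ), c0 * ENNReal.ofReal (2⁻¹ : ℝ)
      ≤ ∫⁻ u in Ioo (0:ℝ) y, ENNReal.ofReal
        (Real.exp (-0 * u) * ((y - u) ^ k * Real.exp (-t * (y - u)))) := by
    intro y hy
    have hy1 : (1:ℝ) < y := Set.mem_Ioi.mp hy
    have hsub : Ioo (y - 1) (y - 2⁻¹) ⊆ Ioo (0:ℝ) y := by
      intro u hu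
      constructor
      · have := hu.1; linarith
      · have := hu.2; linarith [ (by norm_num : (0:ℝ) < 2⁻¹) ]
    calc c0 * ENNReal.ofReal (2⁻¹ : ℝ)
        = c0 * volume (Ioo (y - 1) (y - 2⁻¹)) := by
          rw [Real.volume_Ioo]
          norm_num
      _ = ∫⁻ _ in Ioo (y - 1) (y - 2⁻¹), c0 := (setLIntegral_const _ _).symm
      _ ≤ ∫⁻ u in Ioo (y - 1) (y - 2⁻¹), ENNReal.ofReal
            (Real.exp (-0 * u) * ((y - u) ^ k * Real.exp (-t * (y - u)))) := by
          apply lintegral_mono_ae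
          refine (ae_restrict_iff' measurableSet_Ioo).2 ?_
          filter_upwards with u hu
          rw [hc0]
          apply ENNReal.ofReal_le_ofReal
          have h1 : (2⁻¹ : ℝ) ≤ y - u := by have := hu.2; linarith
          have h2 : y - u ≤ 1 := by have := hu.1; linarith
          have h3 : (2⁻¹ : ℝ) ^ k ≤ (y - u) ^ k :=
            pow_le_pow_left₀ (by norm_num) h1 k
          have h4 : Real.exp (-t) ≤ Real.exp (-t * (y - u)) := by
            apply Real.exp_le_exp.2
            nlinarith
          have h5 : (0:ℝ) ≤ (y - u) ^ k := pow_nonneg (by linarith) k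
          rw [neg_zero, zero_mul, Real.exp_zero, one_mul]
          calc (2⁻¹ : ℝ) ^ k * Real.exp (-t) ≤ (y - u) ^ k * Real.exp (-t) :=
                mul_le_mul_of_nonneg_right h3 (Real.exp_pos _).le
            _ ≤ (y - u) ^ k * Real.exp (-t * (y - u)) :=
                mul_le_mul_of_nonneg_left h4 h5
      _ ≤ _ := lintegral_mono_set hsub
  rw [eq_top_iff]
  calc (⊤ : ℝ≥0∞) = (c0 * ENNReal.ofReal (2⁻¹ : ℝ)) * ∫⁻ y in Ioi (1:ℝ),
        ENNReal.ofReal (f y) := by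
        rw [hIoi1, ENNReal.mul_top]
        apply mul_ne_zero hc0pos
        simp only [ne_eq, ENNReal.ofReal_eq_zero, not_le]
        norm_num
    _ = ∫⁻ y in Ioi (1:ℝ), (c0 * ENNReal.ofReal (2⁻¹ : ℝ)) * ENNReal.ofReal (f y) := by
        rw [lintegral_const_mul' _ _ (ENNReal.mul_ne_top ENNReal.ofReal_ne_top
          ENNReal.ofReal_ne_top)]
    _ ≤ ∫⁻ y in Ioi (1:ℝ), (∫⁻ u in Ioo (0:ℝ) y, ENNReal.ofReal
          (Real.exp (-0 * u) * ((y - u) ^ k * Real.exp (-t * (y - u)))))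
          * ENNReal.ofReal (f y) := by
        apply lintegral_mono_ae
        refine (ae_restrict_iff' measurableSet_Ioi).2 ?_
        filter_upwards with y hy
        exact mul_le_mul_left (key y hy) _
    _ ≤ _ := lintegral_mono_set (Set.Ioi_subset_Ioi zero_le_one)

lemma iteratedDeriv_zero_fun (n : ℕ) : iteratedDeriv n (fun _ : ℝ => (0:ℝ)) = fun _ => (0:ℝ) := by
  induction n with
  | zero => rw [iteratedDeriv_zero]
  | succ n ih =>
    rw [iteratedDeriv_succ', deriv_const']
    exact ih

end DH

open DH

/-- Differentiating the Laplace transform of the Dickson–Hipp operator in the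
parameter `s` yields the generalized operators `T_{s,k}`. -/
theorem deriv_dickson_hipp (f : ℝ → ℝ) (hmeas : Measurable f)
    (hnn : ∀ x, 0 ≤ x → 0 ≤ f x)
    (hint : ∀ s : ℝ, 0 < s → ∀ k : ℕ, ∀ u : ℝ, 0 ≤ u →
      IntegrableOn (fun y => (y - u) ^ k * Real.exp (-s * (y - u)) * f y) (Set.Ioi u))
    (r : ℝ) (hr : 0 ≤ r) (s : ℝ) (hs : 0 < s) (k : ℕ) :
    iteratedDeriv k
      (fun t => ∫ u in Set.Ioi (0:ℝ), Real.exp (-r * u) *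
        ∫ y in Set.Ioi u, Real.exp (-t * (y - u)) * f y) s
    = (-1) ^ k * ∫ u in Set.Ioi (0:ℝ), Real.exp (-r * u) *
        ∫ y in Set.Ioi u, (y - u) ^ k * Real.exp (-s * (y - u)) * f y := by
  have horig : (fun t => ∫ u in Set.Ioi (0:ℝ), Real.exp (-r * u) *
      ∫ y in Set.Ioi u, Real.exp (-t * (y - u)) * f y) = g f r 0 := by
    funext t
    simp only [g, K, pow_zero, one_mul]
  have hrhs : (∫ u in Set.Ioi (0:ℝ), Real.exp (-r * u) *
      ∫ y in Set.Ioi u, (y - u) ^ k * Real.exp (-s * (y - u)) * f y) = g f r k s := rfl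
  rw [horig, hrhs]
  by_cases hA : IntegrableOn (fun u => Real.exp (-r * u) * K f 0 (s/2) u) (Set.Ioi (0:ℝ))
  · exact iter_deriv_g f hmeas hnn hint r (half_pos hs) hA k s (by linarith)
  · have hr0 : r = 0 := by
      by_contra h
      have hrpos : 0 < r := lt_of_le_of_ne hr (Ne.symm h)
      exact hA ((outer_lint_iff f hmeas hnn r 0 (s/2)).1
        (rpos_lint_ne_top f hmeas hnn hint hrpos (half_pos hs)))
    subst hr0
    have hL : ∫⁻ y in Set.Ioi (0:ℝ), ENNReal.ofReal (f y) = ∞ := by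
      by_contra hL
      exact hA ((outer_lint_iff f hmeas hnn 0 0 (s/2)).1
        (lint0_ne_top f hmeas hnn hint hL (half_pos hs)))
    have hall : ∀ (j : ℕ) (t : ℝ), 0 < t →
        ¬ IntegrableOn (fun u => Real.exp (-0 * u) * K f j t u) (Set.Ioi (0:ℝ)) := by
      intro j t ht hI
      exact ((outer_lint_iff f hmeas hnn 0 j t).2 hI)
        (lint_eq_top f hmeas hnn hint hL j ht)
    have hg0 : ∀ t : ℝ, 0 < t → g f 0 0 t = 0 := by
      intro t ht
      exact integral_undef (hall 0 t ht)
    have hev : g f 0 0 =ᶠ[nhds s] (fun _ => (0:ℝ)) := by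
      filter_upwards [Ioi_mem_nhds hs] with τ hτ
      exact hg0 τ hτ
    rw [Filter.EventuallyEq.iteratedDeriv_eq k hev, iteratedDeriv_zero_fun]
    have hzero : g f 0 k s = 0 := integral_undef (hall k s hs)
    rw [hzero, mul_zero]
end

section
/- Frullani's integral identity: for real α > 0, β > 0 and complex z with Re(z) ≤ 0, one has (α/(α - z))^β = exp(-∫_0^∞ (1 - e^{zt}) β t^{-1} e^{-αt} dt). -/
open MeasureTheory Real

lemma frullani_aux_cexp (c : ℂ) (hc : 0 < c.re) :
    ∫ t : ℝ in Set.Ioi (0:ℝ), Complex.exp (-(c * t)) = c⁻¹ := by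
  have hc0 : c ≠ 0 := fun h => by simp [h] at hc
  have hderiv : ∀ x ∈ Set.Ioi (0:ℝ),
      HasDerivAt (fun t : ℝ => -c⁻¹ * Complex.exp (-(c * t))) (Complex.exp (-(c * x))) x := by
    intro x _
    have h1 : HasDerivAt (fun w : ℂ => -c⁻¹ * Complex.exp (-(c * w)))
        (Complex.exp (-(c * (x:ℂ)))) (x:ℂ) := by
      have h := ((((hasDerivAt_id ((x:ℂ))).const_mul c).neg).cexp).const_mul (-c⁻¹)
      refine h.congr_deriv ?_
      field_simp
      rfl
    exact h1.comp_ofReal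
  have hnorm : ∀ t : ℝ, ‖Complex.exp (-(c * t))‖ = rexp (-c.re * t) := by
    intro t
    rw [Complex.norm_exp]
    congr 1
    simp [Complex.mul_re]
  have hint : IntegrableOn (fun t : ℝ => Complex.exp (-(c * t))) (Set.Ioi 0) := by
    apply Integrable.mono' (exp_neg_integrableOn_Ioi 0 hc)
    · exact (Continuous.aestronglyMeasurable (by fun_prop))
    · filter_upwards with t
      rw [hnorm]
  have htend : Filter.Tendsto (fun t : ℝ => -c⁻¹ * Complex.exp (-(c * t)))
      Filter.atTop (nhds 0) := by
    rw [tendsto_zero_iff_norm_tendsto_zero]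
    have h0 : Filter.Tendsto (fun t : ℝ => ‖(-c⁻¹ : ℂ)‖ * rexp (-(c.re * t)))
        Filter.atTop (nhds 0) := by
      have h1 : Filter.Tendsto (fun t : ℝ => rexp (-(c.re * t))) Filter.atTop (nhds 0) :=
        tendsto_exp_neg_atTop_nhds_zero.comp (Filter.Tendsto.const_mul_atTop hc Filter.tendsto_id)
      simpa using h1.const_mul ‖(-c⁻¹ : ℂ)‖
    refine squeeze_zero (fun t => norm_nonneg _) (fun t => ?_) h0
    rw [norm_mul, hnorm]
    simp [neg_mul]
  have hcont : ContinuousWithinAt (fun t : ℝ => -c⁻¹ * Complex.exp (-(c * t)))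
      (Set.Ici 0) 0 := (Continuous.continuousWithinAt (by fun_prop))
  have := integral_Ioi_of_hasDerivAt_of_tendsto hcont hderiv hint htend
  rw [this]
  simp

lemma frullani_aux_inner (z : ℂ) (t : ℝ) (ht : 0 < t) :
    ∫ s in Set.Ioc (0:ℝ) 1, -z * Complex.exp (z * t * s)
      = (1 - Complex.exp (z * t)) * (t:ℂ)⁻¹ := by
  have htne : (t:ℂ) ≠ 0 := by exact_mod_cast ht.ne'
  rw [← intervalIntegral.integral_of_le zero_le_one]
  have hderiv : ∀ s ∈ Set.uIcc (0:ℝ) 1,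
      HasDerivAt (fun s : ℝ => -(t:ℂ)⁻¹ * Complex.exp (z * t * s)) (-z * Complex.exp (z * t * s)) s := by
    intro s _
    have h1 : HasDerivAt (fun w : ℂ => -(t:ℂ)⁻¹ * Complex.exp (z * t * w))
        (-z * Complex.exp (z * t * (s:ℂ))) (s:ℂ) := by
      have h := (((hasDerivAt_id ((s:ℂ))).const_mul (z * t)).cexp).const_mul (-(t:ℂ)⁻¹)
      refine h.congr_deriv ?_
      field_simp
      ring
      rfl
    exact h1.comp_ofReal
  rw [intervalIntegral.integral_eq_sub_of_hasDerivAt hderiv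
    ((Continuous.intervalIntegrable (by fun_prop) 0 1))]
  push_cast
  field_simp
  rw [mul_zero, Complex.exp_zero]
  ring

lemma frullani_aux_log (α : ℝ) (hα : 0 < α) (z : ℂ) (hz : z.re ≤ 0) :
    ∫ s in Set.Ioc (0:ℝ) 1, -z * ((α:ℂ) - s * z)⁻¹
      = Complex.log ((α:ℂ) - z) - Complex.log (α:ℂ) := by
  have hre : ∀ s : ℝ, ((α:ℂ) - s * z).re = α - s * z.re := by
    intro s
    simp [Complex.mul_re]
  have hne : ∀ s : ℝ, s ∈ Set.Icc (0:ℝ) 1 → 0 < ((α:ℂ) - s * z).re := by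
    intro s hs
    have h0 : (s:ℝ) * z.re ≤ 0 := mul_nonpos_of_nonneg_of_nonpos hs.1 hz
    rw [hre]
    linarith
  rw [← intervalIntegral.integral_of_le zero_le_one]
  have hderiv : ∀ s ∈ Set.uIcc (0:ℝ) 1,
      HasDerivAt (fun s : ℝ => Complex.log ((α:ℝ) - s * z)) (-z * ((α:ℂ) - s * z)⁻¹) s := by
    intro s hs
    rw [Set.uIcc_of_le zero_le_one] at hs
    have h1 : HasDerivAt (fun w : ℂ => (α:ℂ) - w * z) (-z) ((s:ℂ)) := by
      simpa using ((hasDerivAt_id ((s:ℂ))).mul_const z).const_sub (α:ℂ)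
    have h2 : HasDerivAt (fun s : ℝ => (α:ℂ) - s * z) (-z) s := h1.comp_ofReal
    have h3 : ((α:ℂ) - (s:ℂ) * z) ∈ Complex.slitPlane :=
      Complex.mem_slitPlane_iff.mpr (Or.inl (hne s hs))
    have h4 := (h1.clog h3).comp_ofReal
    rwa [div_eq_mul_inv] at h4
  rw [intervalIntegral.integral_eq_sub_of_hasDerivAt hderiv]
  · norm_num
  · apply ContinuousOn.intervalIntegrable
    rw [Set.uIcc_of_le zero_le_one]
    apply ContinuousOn.mul continuousOn_const
    apply ContinuousOn.inv₀
    · fun_prop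
    · intro s hs
      exact fun h => (hne s hs).ne' (by rw [h]; simp)

lemma frullani_aux_integrable (α : ℝ) (hα : 0 < α) (z : ℂ) (hz : z.re ≤ 0) :
    Integrable (Function.uncurry fun (t s : ℝ) =>
        -z * Complex.exp (z * t * s) * (Real.exp (-α * t) : ℂ))
      ((volume.restrict (Set.Ioi 0)).prod (volume.restrict (Set.Ioc 0 1))) := by
  have hbound : Integrable (fun p : ℝ × ℝ => (‖z‖ * rexp (-α * p.1)) * 1)
      ((volume.restrict (Set.Ioi 0)).prod (volume.restrict (Set.Ioc 0 1))) := by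
    have hg : Integrable (fun _ : ℝ => (1:ℝ)) (volume.restrict (Set.Ioc (0:ℝ) 1)) := by
      rw [← IntegrableOn, integrableOn_const_iff]
      right
      simp [Real.volume_Ioc]
    exact Integrable.mul_prod ((exp_neg_integrableOn_Ioi 0 hα).const_mul ‖z‖) hg
  apply Integrable.mono' hbound
  · exact Continuous.aestronglyMeasurable (by fun_prop)
  · rw [Measure.prod_restrict, ae_restrict_iff' (measurableSet_Ioi.prod measurableSet_Ioc)]
    filter_upwards with p hp
    obtain ⟨ht, hs⟩ := hp
    simp only [Set.mem_Ioi] at ht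
    simp only [Set.mem_Ioc] at hs
    rw [Function.uncurry]
    have h1 : ‖-z * Complex.exp (z * p.1 * p.2) * ((rexp (-α * p.1) : ℝ) : ℂ)‖
        = ‖z‖ * rexp ((z * p.1 * p.2).re) * rexp (-α * p.1) := by
      simp [Complex.norm_exp, Complex.norm_real,
        abs_of_pos (exp_pos _)]
    rw [h1, mul_one]
    have h2 : (z * (p.1:ℂ) * (p.2:ℂ)).re = z.re * p.1 * p.2 := by
      simp [Complex.mul_re]
    have h3 : rexp ((z * (p.1:ℂ) * (p.2:ℂ)).re) ≤ 1 := by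
      rw [Real.exp_le_one_iff, h2, mul_assoc]
      exact mul_nonpos_of_nonpos_of_nonneg hz (mul_nonneg ht.le hs.1.le)
    calc ‖z‖ * rexp ((z * (p.1:ℂ) * (p.2:ℂ)).re) * rexp (-α * p.1)
        ≤ ‖z‖ * 1 * rexp (-α * p.1) := by gcongr
      _ = ‖z‖ * rexp (-α * p.1) := by ring

/-- Frullani's integral identity. -/
theorem frullani_integral (α β : ℝ) (hα : 0 < α) (hβ : 0 < β) (z : ℂ) (hz : z.re ≤ 0) :
    ((α : ℂ) / ((α : ℂ) - z)) ^ (β : ℂ)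
      = Complex.exp (-(∫ t in Set.Ioi (0:ℝ),
          (1 - Complex.exp (z * t)) * (β : ℂ) * (t : ℂ)⁻¹ * (Real.exp (-α * t) : ℂ))) := by
  have hre : 0 < ((α:ℂ) - z).re := by
    simp only [Complex.sub_re, Complex.ofReal_re]
    linarith
  have hαz : ((α:ℂ) - z) ≠ 0 := fun h => by rw [h] at hre; simp at hre
  have hα0 : ((α:ℂ)) ≠ 0 := by exact_mod_cast hα.ne'
  have key : (∫ t in Set.Ioi (0:ℝ),
        (1 - Complex.exp (z * t)) * (β : ℂ) * (t : ℂ)⁻¹ * (Real.exp (-α * t) : ℂ))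
      = (β:ℂ) * (Complex.log ((α:ℂ) - z) - Complex.log (α:ℂ)) := by
    have h1 : Set.EqOn (fun t : ℝ => (1 - Complex.exp (z * t)) * (β : ℂ) * (t : ℂ)⁻¹ * (Real.exp (-α * t) : ℂ))
        (fun t : ℝ => (β:ℂ) * ∫ s in Set.Ioc (0:ℝ) 1,
          -z * Complex.exp (z * t * s) * (Real.exp (-α * t) : ℂ)) (Set.Ioi 0) := by
      intro t ht
      simp only [Set.mem_Ioi] at ht
      simp only
      rw [integral_mul_const, frullani_aux_inner z t ht]
      ring
    rw [setIntegral_congr_fun measurableSet_Ioi h1, integral_const_mul]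
    congr 1
    rw [integral_integral_swap (frullani_aux_integrable α hα z hz)]
    have h2 : Set.EqOn
        (fun s : ℝ => ∫ t in Set.Ioi (0:ℝ), -z * Complex.exp (z * t * s) * (Real.exp (-α * t) : ℂ))
        (fun s : ℝ => -z * ((α:ℂ) - s * z)⁻¹) (Set.Ioc 0 1) := by
      intro s hs
      simp only [Set.mem_Ioc] at hs
      simp only
      have heq : ∀ t : ℝ, -z * Complex.exp (z * t * s) * (Real.exp (-α * t) : ℂ)
          = -z * Complex.exp (-(((α:ℂ) - s * z) * t)) := by
        intro t
        rw [mul_assoc, Complex.ofReal_exp, ← Complex.exp_add]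
        congr 2
        push_cast
        ring
      simp only [heq]
      rw [integral_const_mul, frullani_aux_cexp]
      have hre : ((α:ℂ) - (s:ℂ) * z).re = α - s * z.re := by
        simp [Complex.mul_re]
      rw [hre]
      have h0 : (s:ℝ) * z.re ≤ 0 := mul_nonpos_of_nonneg_of_nonpos hs.1.le hz
      linarith
    rw [setIntegral_congr_fun measurableSet_Ioc h2]
    exact frullani_aux_log α hα z hz
  rw [key, Complex.cpow_def_of_ne_zero (div_ne_zero hα0 hαz), div_eq_mul_inv,
    Complex.log_ofReal_mul hα (inv_ne_zero hαz), Complex.log_inv _ (fun h => by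
      rw [Complex.arg_eq_pi_iff] at h
      linarith [h.1]),
    ← Complex.ofReal_log hα.le]
  congr 1
  ring
end

section
/- Let P_1(r) = Π_{j=1}^N (α_j - r)^{n_j} be a polynomial of degree m = Σ n_j with distinct roots α_1 < … < α_N, and let Q be a polynomial of degree at most m-1 with Q(0)/Π α_j^{n_j} = 1. Let r, r_1, …, r_{m+1} be m+2 pairwise distinct complex numbers, none equal to any α_l. Then Σ_{j=1}^{m+1} P_1(r_j) · [1/Π_{k≠j}(r_k - r_j)] · [(Q(-r)/P_1(r) - Q(-r_j)/P_1(r_j))/(r_j - r)] = 0. -/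
open Finset

open Polynomial in
lemma divdiff_zero (m : ℕ) (v : Fin (m + 1) → ℂ) (hv : Function.Injective v)
    (p : Polynomial ℂ) (hp : p.degree < (m : ℕ)) :
    ∑ j, p.eval (v j) * ∏ k ∈ Finset.univ.erase j, (v j - v k)⁻¹ = 0 := by
  have hinj : Set.InjOn v ↑(univ : Finset (Fin (m + 1))) := hv.injOn
  have hcard : #(univ : Finset (Fin (m + 1))) = m + 1 := by simp
  have hdeg : p.degree < (#(univ : Finset (Fin (m + 1))) : ℕ) := by
    rw [hcard]; exact hp.trans_le (by exact_mod_cast Nat.cast_le.mpr (Nat.le_succ m))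
  have hint := Lagrange.eq_interpolate (v := v) hinj hdeg
  have hb : ∀ j : Fin (m + 1), (Lagrange.basis univ v j).coeff m
      = ∏ k ∈ univ.erase j, (v j - v k)⁻¹ := by
    intro j
    have hnd : (Lagrange.basis univ v j).natDegree = m := by
      rw [Lagrange.natDegree_basis hinj (mem_univ j), hcard]
      omega
    have h1 : (Lagrange.basis univ v j).coeff m = (Lagrange.basis univ v j).leadingCoeff := by
      rw [Polynomial.leadingCoeff, hnd]
    rw [h1, Lagrange.basis, leadingCoeff_prod]
    refine Finset.prod_congr rfl fun k hk => ?_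
    have hjk : v j ≠ v k := fun h => (mem_erase.mp hk).1 (hv h).symm
    rw [Lagrange.basisDivisor, leadingCoeff_mul, leadingCoeff_C, leadingCoeff_X_sub_C, mul_one]
  have := congrArg (fun q => q.coeff m) hint
  simp only [Lagrange.interpolate_apply, Polynomial.finset_sum_coeff,
    Polynomial.coeff_C_mul, hb] at this
  rw [Polynomial.coeff_eq_zero_of_degree_lt hp] at this
  exact this.symm

/-- The divided-difference sum `J₀(r)` vanishes identically. -/
theorem J0_vanishes (N : ℕ) (hN : 0 < N) (α : Fin N → ℝ) (hα : StrictMono α)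
    (hαpos : ∀ j, 0 < α j)
    (n : Fin N → ℕ) (hn : ∀ j, 0 < n j) (m : ℕ) (hm : m = ∑ j, n j)
    (Q : Polynomial ℂ) (hQdeg : Q.natDegree ≤ m - 1)
    (hQ0 : Q.eval 0 = ∏ j, (α j : ℂ) ^ (n j))
    (lam₁ : ℝ) (hlam : 0 < lam₁)
    (P₁ : ℂ → ℂ) (hP₁ : ∀ z, P₁ z = ∏ j, ((α j : ℂ) - z) ^ (n j))
    (r : ℂ) (rr : Fin (m + 1) → ℂ) (hinj : Function.Injective rr)
    (hne : ∀ j, rr j ≠ r) (hra : ∀ z ∈ Set.range rr ∪ {r}, ∀ l, z ≠ (α l : ℂ)) :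
    (lam₁ : ℂ) * ∑ j, P₁ (rr j) * (∏ k ∈ Finset.univ.erase j, (rr k - rr j))⁻¹ *
      ((Q.eval (-r) / P₁ r - Q.eval (-(rr j)) / P₁ (rr j)) / (rr j - r)) = 0 := by
  classical
  -- P₁ does not vanish at r or at the rr j
  have hP₁ne : ∀ z ∈ Set.range rr ∪ {r}, P₁ z ≠ 0 := by
    intro z hz
    rw [hP₁]
    refine Finset.prod_ne_zero_iff.mpr fun l _ => pow_ne_zero _ ?_
    exact sub_ne_zero_of_ne fun h => hra z hz l (by linear_combination -h)
  have hP₁r : P₁ r ≠ 0 := hP₁ne r (Or.inr rfl)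
  have hP₁j : ∀ j, P₁ (rr j) ≠ 0 := fun j => hP₁ne _ (Or.inl ⟨j, rfl⟩)
  -- m ≥ 1
  have hm1 : 1 ≤ m := by
    rw [hm]
    calc 1 ≤ n ⟨0, hN⟩ := hn _
    _ ≤ ∑ j, n j := Finset.single_le_sum (fun _ _ => Nat.zero_le _) (Finset.mem_univ _)
  -- the polynomial P
  set Pp : Polynomial ℂ := ∏ j, (Polynomial.C (α j : ℂ) - Polynomial.X) ^ (n j) with hPp
  have hPpev : ∀ z, Pp.eval z = P₁ z := by
    intro z; rw [hP₁, hPp]; simp [Polynomial.eval_prod]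
  have hPpdeg : Pp.natDegree = m := by
    rw [hPp, Polynomial.natDegree_prod]
    · rw [hm]
      refine Finset.sum_congr rfl fun j _ => ?_
      rw [Polynomial.natDegree_pow]
      have : (Polynomial.C (α j : ℂ) - Polynomial.X).natDegree = 1 := by
        rw [show Polynomial.C (α j : ℂ) - Polynomial.X
            = -(Polynomial.X - Polynomial.C (α j : ℂ)) by ring, Polynomial.natDegree_neg,
          Polynomial.natDegree_X_sub_C]
      rw [this, mul_one]
    · intro j _
      refine pow_ne_zero _ ?_
      intro h
      have := congrArg (Polynomial.eval ((α j : ℂ) + 1)) h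
      simp at this
  -- the numerator polynomial
  set A : ℂ := Q.eval (-r) / P₁ r with hA
  set Np : Polynomial ℂ := Polynomial.C A * Pp - Q.comp (-Polynomial.X) with hNp
  have hNpev : ∀ z, Np.eval z = A * P₁ z - Q.eval (-z) := by
    intro z; rw [hNp]; simp [hPpev]
  have hNproot : Np.IsRoot r := by
    rw [Polynomial.IsRoot, hNpev, hA, div_mul_cancel₀ _ hP₁r, sub_self]
  obtain ⟨p, hp⟩ := (Polynomial.dvd_iff_isRoot.mpr hNproot)
  -- degree bound on Np
  have hNpdeg : Np.degree ≤ (m : ℕ) := by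
    rw [hNp]
    refine (Polynomial.degree_sub_le _ _).trans (max_le ?_ ?_)
    · refine (Polynomial.degree_mul_le _ _).trans ?_
      refine le_trans (add_le_add (Polynomial.degree_C_le) (Polynomial.degree_le_natDegree)) ?_
      rw [hPpdeg, zero_add]
    · refine (Polynomial.natDegree_le_iff_degree_le.mp ?_)
      refine (Polynomial.natDegree_comp_le).trans ?_
      have : (-Polynomial.X : Polynomial ℂ).natDegree = 1 := by
        rw [Polynomial.natDegree_neg, Polynomial.natDegree_X]
      rw [this, mul_one]
      omega
  have hpdeg : p.degree < (m : ℕ) := by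
    by_cases hp0 : p = 0
    · rw [hp0, Polynomial.degree_zero]
      exact WithBot.bot_lt_coe _
    · have h1 : Np.degree = 1 + p.degree := by
        rw [hp, Polynomial.degree_mul, Polynomial.degree_X_sub_C]
      rw [h1] at hNpdeg
      rw [Polynomial.degree_eq_natDegree hp0] at hNpdeg ⊢
      have hle : 1 + p.natDegree ≤ m := by
        rw [show (1 : WithBot ℕ) = ((1 : ℕ) : WithBot ℕ) from rfl, ← Nat.cast_add] at hNpdeg
        exact_mod_cast hNpdeg
      exact_mod_cast (show p.natDegree < m by omega)
  -- summand rewrite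
  have hminv : ((-1 : ℂ) ^ m)⁻¹ = (-1 : ℂ) ^ m := by rw [← inv_pow]; norm_num
  have hsum : ∀ j, P₁ (rr j) * (∏ k ∈ Finset.univ.erase j, (rr k - rr j))⁻¹ *
      ((A - Q.eval (-(rr j)) / P₁ (rr j)) / (rr j - r))
      = (-1 : ℂ) ^ m * (p.eval (rr j) * ∏ k ∈ Finset.univ.erase j, (rr j - rr k)⁻¹) := by
    intro j
    have h1 : P₁ (rr j) * (A - Q.eval (-(rr j)) / P₁ (rr j)) = Np.eval (rr j) := by
      rw [hNpev, mul_sub, mul_div_cancel₀ _ (hP₁j j), mul_comm]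
    have h2 : Np.eval (rr j) = (rr j - r) * p.eval (rr j) := by
      rw [hp]; simp
    have hc : (Finset.univ.erase j).card = m := by
      rw [Finset.card_erase_of_mem (Finset.mem_univ j), Finset.card_univ, Fintype.card_fin]
      omega
    have h3 : ∏ k ∈ Finset.univ.erase j, (rr k - rr j)
        = (-1 : ℂ) ^ m * ∏ k ∈ Finset.univ.erase j, (rr j - rr k) := by
      calc ∏ k ∈ Finset.univ.erase j, (rr k - rr j)
          = ∏ k ∈ Finset.univ.erase j, ((-1 : ℂ) * (rr j - rr k)) := by
            exact Finset.prod_congr rfl fun k _ => by ring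
        _ = (∏ _k ∈ Finset.univ.erase j, (-1 : ℂ)) *
            ∏ k ∈ Finset.univ.erase j, (rr j - rr k) := Finset.prod_mul_distrib
        _ = (-1 : ℂ) ^ m * ∏ k ∈ Finset.univ.erase j, (rr j - rr k) := by
            rw [Finset.prod_const, hc]
    have hrne : rr j - r ≠ 0 := sub_ne_zero_of_ne (hne j)
    have h4 : (A - Q.eval (-(rr j)) / P₁ (rr j)) / (rr j - r)
        = p.eval (rr j) / P₁ (rr j) := by
      rw [div_eq_div_iff hrne (hP₁j j)]
      linear_combination h1.trans h2
    have hcancel : P₁ (rr j) * (P₁ (rr j))⁻¹ = 1 := mul_inv_cancel₀ (hP₁j j)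
    rw [h4, h3, mul_inv, hminv, Finset.prod_inv_distrib, div_eq_mul_inv]
    calc P₁ (rr j) * ((-1 : ℂ) ^ m * (∏ k ∈ Finset.univ.erase j, (rr j - rr k))⁻¹) *
        (p.eval (rr j) * (P₁ (rr j))⁻¹)
        = (-1 : ℂ) ^ m * (p.eval (rr j) * (∏ k ∈ Finset.univ.erase j, (rr j - rr k))⁻¹) *
          (P₁ (rr j) * (P₁ (rr j))⁻¹) := by ring
      _ = (-1 : ℂ) ^ m * (p.eval (rr j) * (∏ k ∈ Finset.univ.erase j, (rr j - rr k))⁻¹) := by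
          rw [hcancel, mul_one]
  rw [Finset.sum_congr rfl fun j _ => hsum j, ← Finset.mul_sum,
    divdiff_zero m rr hinj p hpdeg, mul_zero, mul_zero]
end

section
/- Suppose a random variable Y ≥ 0 has Laplace transform E[e^{-rY}] = q/(q + Ψ_q(r)) for some q > 0, where Ψ_q(r) = ∫_0^∞ (1 - e^{-rx}) μ(dx) is the Laplace exponent of a subordinator with Lévy measure μ of finite mass on (0,∞) (or more generally a driftless subordinator). Then Y is infinitely divisible with Lévy measure π(dx) = ∫_0^∞ t^{-1} e^{-qt} P[N(t) ∈ dx] dt, where N is the subordinator with Laplace exponent Ψ_q; i.e. E[e^{-rY}] = exp(-∫_0^∞ (1 - e^{-rx}) π(dx)). -/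
open MeasureTheory Real Set

/-- `∫ t in Ioi 0, exp (-s*t) = s⁻¹` for `s > 0`. -/
lemma exp_neg_mul_integral_Ioi {s : ℝ} (hs : 0 < s) :
    ∫ t in Ioi (0:ℝ), Real.exp (-(s * t)) = s⁻¹ := by
  have := integral_comp_mul_left_Ioi (fun u => Real.exp (-u)) 0 hs
  simp only [mul_zero, integral_exp_neg_Ioi, neg_zero, Real.exp_zero, smul_eq_mul,
    mul_one] at this
  simpa using this

/-- Interval integral of `exp (-t*s)` in `s`. -/
lemma exp_neg_mul_intervalIntegral {t : ℝ} (ht : t ≠ 0) (a b : ℝ) :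
    ∫ s in a..b, Real.exp (-(t * s)) = t⁻¹ * (Real.exp (-(t*a)) - Real.exp (-(t*b))) := by
  have h : ∀ s : ℝ, Real.exp (-(t * s)) = Real.exp ((-t) * s) := by intro s; ring_nf
  simp_rw [h]
  rw [intervalIntegral.integral_comp_mul_left Real.exp (neg_ne_zero.mpr ht),
    integral_exp, smul_eq_mul, inv_neg]
  simp only [neg_mul]
  ring

/-- Frullani's integral for exponentials. -/
lemma frullani_exp {a b : ℝ} (ha : 0 < a) (hab : a < b) :
    ∫ t in Ioi (0:ℝ), t⁻¹ * (Real.exp (-(a*t)) - Real.exp (-(b*t))) = Real.log (b / a) := by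
  have hb : 0 < b := ha.trans hab
  -- step 1: rewrite integrand as an inner integral
  have step1 : ∀ t ∈ Ioi (0:ℝ),
      t⁻¹ * (Real.exp (-(a*t)) - Real.exp (-(b*t)))
        = ∫ s in Ioc a b, Real.exp (-(t * s)) := by
    intro t ht
    rw [← intervalIntegral.integral_of_le hab.le,
      exp_neg_mul_intervalIntegral (ne_of_gt ht)]
    ring_nf
  rw [setIntegral_congr_fun measurableSet_Ioi step1]
  -- integrability on the product
  have hcont : Continuous fun p : ℝ × ℝ => Real.exp (-(p.1 * p.2)) := by
    continuity
  have hInt : Integrable (Function.uncurry fun t s => Real.exp (-(t * s)))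
      ((volume.restrict (Ioi (0:ℝ))).prod (volume.restrict (Ioc a b))) := by
    have hg : Integrable (fun p : ℝ × ℝ => Real.exp (-(a * p.1)) * (1:ℝ))
        ((volume.restrict (Ioi (0:ℝ))).prod (volume.restrict (Ioc a b))) := by
      refine Integrable.mul_prod (L := ℝ) (f := fun t => Real.exp (-(a*t))) (g := fun _ => (1:ℝ)) ?_ ?_
      · simpa [neg_mul, IntegrableOn] using exp_neg_integrableOn_Ioi 0 ha
      · exact (integrableOn_const_iff (C := (1:ℝ))).mpr (Or.inr measure_Ioc_lt_top)
    refine Integrable.mono' hg (hcont.aestronglyMeasurable) ?_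
    rw [Measure.prod_restrict]
    filter_upwards [ae_restrict_mem (measurableSet_Ioi.prod measurableSet_Ioc)] with p hp
    obtain ⟨ht, hs⟩ := hp
    simp only [Function.uncurry, Real.norm_eq_abs, abs_of_pos (Real.exp_pos _), mul_one]
    apply Real.exp_le_exp.mpr
    have : a * p.1 ≤ p.1 * p.2 := by
      rw [mul_comm a p.1]
      exact mul_le_mul_of_nonneg_left hs.1.le (le_of_lt ht)
    linarith
  -- step 2: Fubini
  rw [MeasureTheory.integral_integral_swap hInt]
  -- step 3: inner integral
  have step3 : ∀ s ∈ Ioc a b,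
      (∫ t in Ioi (0:ℝ), Real.exp (-(t * s))) = s⁻¹ := by
    intro s hs
    have hs0 : 0 < s := ha.trans hs.1
    simp_rw [mul_comm]
    exact exp_neg_mul_integral_Ioi hs0
  rw [setIntegral_congr_fun measurableSet_Ioc step3]
  have h0 : (0:ℝ) ∉ Set.uIcc a b := by
    rw [Set.uIcc_of_le hab.le]
    intro h
    exact absurd h.1 (not_le.mpr ha)
  rw [← intervalIntegral.integral_of_le hab.le, integral_inv h0]

/-- Infinite divisibility of a random variable whose Laplace transform is
`q/(q + Ψ_q)`: it admits the Lévy–Khintchine representation with Lévy measure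
`π(dx) = ∫_0^∞ t⁻¹ e^{-qt} P[N(t) ∈ dx] dt`. -/
theorem compound_geometric_levy_khintchine {Ω Ω' : Type*} [MeasureSpace Ω] [MeasureSpace Ω']
    [IsProbabilityMeasure (MeasureTheory.volume : Measure Ω)] [IsProbabilityMeasure (MeasureTheory.volume : Measure Ω')]
    (q : ℝ) (hq : 0 < q) (Y : Ω → ℝ) (hY : ∀ ω, 0 ≤ Y ω)
    (μ : Measure ℝ) [IsFiniteMeasure μ]
    (Ψq : ℝ → ℝ) (hΨq : ∀ r, Ψq r = ∫ x in Set.Ioi (0:ℝ), (1 - Real.exp (-r * x)) ∂μ)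
    (hLY : ∀ r : ℝ, 0 ≤ r → ∫ ω, Real.exp (-r * Y ω) = q / (q + Ψq r))
    (Nt : ℝ → Ω' → ℝ) (hN0 : ∀ t ω, 0 ≤ Nt t ω)
    (hLN : ∀ t : ℝ, 0 ≤ t → ∀ r : ℝ, 0 ≤ r →
      ∫ ω, Real.exp (-r * Nt t ω) = Real.exp (-t * Ψq r)) :
    ∀ r : ℝ, 0 ≤ r →
      ∫ ω, Real.exp (-r * Y ω)
        = Real.exp (-(∫ t in Set.Ioi (0:ℝ),
            t⁻¹ * Real.exp (-q * t) * ∫ ω, (1 - Real.exp (-r * Nt t ω)))) := by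
  intro r hr
  set z := Ψq r with hz_def
  have hz : 0 ≤ z := by
    rw [hz_def, hΨq r]
    refine setIntegral_nonneg measurableSet_Ioi fun x hx => ?_
    have : -r * x ≤ 0 := by
      have := mul_nonneg hr (le_of_lt hx)
      linarith
    have := Real.exp_le_one_iff.mpr this
    linarith
  have hqz : 0 < q + z := by linarith
  -- inner integral computation
  have inner : ∀ t ∈ Ioi (0:ℝ),
      (∫ ω, (1 - Real.exp (-r * Nt t ω))) = 1 - Real.exp (-t * z) := by
    intro t ht
    have hLNt := hLN t (le_of_lt ht) r hr
    have hint : Integrable (fun ω => Real.exp (-r * Nt t ω)) := by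
      by_contra h
      rw [integral_undef h] at hLNt
      exact (Real.exp_pos _).ne' hLNt.symm
    rw [integral_sub (integrable_const 1) hint, integral_const, hLNt]
    simp [hz_def]
  rw [setIntegral_congr_fun measurableSet_Ioi
    (fun t ht => by dsimp only; rw [inner t ht] :
      Set.EqOn (fun t => t⁻¹ * Real.exp (-q * t) * ∫ ω, (1 - Real.exp (-r * Nt t ω)))
        (fun t => t⁻¹ * Real.exp (-q * t) * (1 - Real.exp (-t * z))) (Ioi (0:ℝ)))]
  rw [hLY r hr, ← hz_def]
  rcases eq_or_lt_of_le hz with hz0 | hz0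
  · -- z = 0
    rw [← hz0]
    have : ∀ t : ℝ, t⁻¹ * Real.exp (-q * t) * (1 - Real.exp (-t * 0)) = 0 := by
      intro t; simp
    simp only [this]
    simp [hq.ne']
  · -- z > 0
    have key : ∀ t ∈ Ioi (0:ℝ),
        t⁻¹ * Real.exp (-q * t) * (1 - Real.exp (-t * z))
          = t⁻¹ * (Real.exp (-(q*t)) - Real.exp (-((q+z)*t))) := by
      intro t _
      have : Real.exp (-((q+z)*t)) = Real.exp (-q * t) * Real.exp (-t * z) := by
        rw [← Real.exp_add]; ring_nf
      rw [this]
      ring_nf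
    rw [setIntegral_congr_fun measurableSet_Ioi key,
      frullani_exp hq (lt_add_of_pos_right q hz0)]
    rw [← Real.log_inv, Real.exp_log (by positivity)]
    rw [inv_div]
end

section
/- Compound geometric tail asymptotics: let G be a subexponential probability distribution on (0,∞) with density g and tail Ḡ, and let p ∈ (0,1). Define F(u) = p Ḡ * Σ_{n=0}^∞ p^n g^{*n}(u) (the tail of a geometric compound). Then F(u) / Ḡ(u) → p/(1-p) as u → ∞. -/
open MeasureTheory Real Set Filter ENNReal Topology

/-- Convolution of two functions on `(0,∞)`. -/
noncomputable def convOn (f g : ℝ → ℝ) : ℝ → ℝ := fun u => ∫ x in (0:ℝ)..u, f x * g (u - x)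

/-- `iterConv g n` is the `(n+1)`-fold convolution `g^{*(n+1)}`. -/
noncomputable def iterConv (g : ℝ → ℝ) : ℕ → ℝ → ℝ
  | 0 => g
  | (n + 1) => convOn g (iterConv g n)

namespace CGT

structure Ker (f : ℝ → ℝ) : Prop where
  meas : Measurable f
  nonneg : ∀ x, 0 ≤ f x
  zero : ∀ x ≤ 0, f x = 0

noncomputable def lint (f : ℝ → ℝ) : ℝ≥0∞ := ∫⁻ x, ENNReal.ofReal (f x)

lemma Ker.measK {f : ℝ → ℝ} (hf : Ker f) : Measurable (fun x => ENNReal.ofReal (f x)) :=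
  ENNReal.measurable_ofReal.comp hf.meas

/-- The workhorse: `convOn` as a full-line lower Lebesgue integral. -/
lemma conv_eq_lint {f h : ℝ → ℝ} (hf : Ker f) (hh : Ker h) (u : ℝ) :
    convOn f h u = (∫⁻ x, ENNReal.ofReal (f x) * ENNReal.ofReal (h (u - x))).toReal := by
  rcases le_or_gt u 0 with hu | hu
  · have hL : convOn f h u = 0 := by
      rw [convOn, intervalIntegral.integral_of_ge hu]
      have : ∀ x ∈ Set.Ioc u (0:ℝ), f x * h (u - x) = 0 := fun x hx => by
        rw [hf.zero x hx.2, zero_mul]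
      rw [MeasureTheory.setIntegral_congr_fun measurableSet_Ioc this]
      simp
    have hR : ∀ x : ℝ, ENNReal.ofReal (f x) * ENNReal.ofReal (h (u - x)) = 0 := by
      intro x
      rcases le_or_gt x 0 with hx | hx
      · rw [hf.zero x hx]; simp
      · rw [hh.zero _ (by linarith)]; simp
    rw [hL, lintegral_congr hR]
    simp
  · rw [convOn, intervalIntegral.integral_of_le hu.le]
    rw [MeasureTheory.setIntegral_eq_integral_of_forall_compl_eq_zero
      (fun x hx => ?_)]
    · have hsm : AEStronglyMeasurable (fun x : ℝ => f x * h (u - x)) volume :=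
        Measurable.aestronglyMeasurable (by have h1 := hf.meas; have h2 := hh.meas; fun_prop)
      rw [MeasureTheory.integral_eq_lintegral_of_nonneg_ae
        (Filter.Eventually.of_forall fun x => mul_nonneg (hf.nonneg x) (hh.nonneg _)) hsm]
      congr 1
      exact lintegral_congr fun x => ENNReal.ofReal_mul (hf.nonneg x)
    · rcases not_and_or.1 ((Set.mem_Ioc (a := (0:ℝ))).not.1 hx) with h1 | h2
      · rw [hf.zero x (not_lt.1 h1), zero_mul]
      · rw [hh.zero _ (by push_neg at h2; linarith), mul_zero]

lemma Ker.conv {f h : ℝ → ℝ} (hf : Ker f) (hh : Ker h) : Ker (convOn f h) := by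
  have hm : Measurable fun q : ℝ × ℝ =>
      ENNReal.ofReal (f q.2) * ENNReal.ofReal (h (q.1 - q.2)) :=
    (hf.measK.comp measurable_snd).mul
      (hh.measK.comp (measurable_fst.sub measurable_snd))
  refine ⟨?_, ?_, ?_⟩
  · have : (convOn f h) = fun u =>
        (∫⁻ x, ENNReal.ofReal (f x) * ENNReal.ofReal (h (u - x))).toReal :=
      funext (conv_eq_lint hf hh)
    rw [this]
    exact ENNReal.measurable_toReal.comp hm.lintegral_prod_right'
  · intro u
    rw [conv_eq_lint hf hh]
    exact ENNReal.toReal_nonneg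
  · intro u hu
    rw [conv_eq_lint hf hh]
    have : ∀ x : ℝ, ENNReal.ofReal (f x) * ENNReal.ofReal (h (u - x)) = 0 := by
      intro x
      rcases le_or_gt x 0 with hx | hx
      · rw [hf.zero x hx]; simp
      · rw [hh.zero _ (by linarith)]; simp
    rw [lintegral_congr this]
    simp

lemma lint_conv {f h : ℝ → ℝ} (hf : Ker f) (hh : Ker h)
    (hf' : lint f ≠ ∞) (hh' : lint h ≠ ∞) :
    lint (convOn f h) = lint f * lint h := by
  have hm : Measurable fun q : ℝ × ℝ =>
      ENNReal.ofReal (f q.2) * ENNReal.ofReal (h (q.1 - q.2)) :=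
    (hf.measK.comp measurable_snd).mul
      (hh.measK.comp (measurable_fst.sub measurable_snd))
  set I : ℝ → ℝ≥0∞ := fun u => ∫⁻ x, ENNReal.ofReal (f x) * ENNReal.ofReal (h (u - x))
    with hI
  have hImeas : Measurable I := hm.lintegral_prod_right'
  have key : ∫⁻ u, I u = lint f * lint h := by
    rw [hI]
    rw [lintegral_lintegral_swap (hm.aemeasurable)]
    have : ∀ x : ℝ, ∫⁻ u, ENNReal.ofReal (f x) * ENNReal.ofReal (h (u - x)) =
        ENNReal.ofReal (f x) * lint h := by
      intro x
      rw [lintegral_const_mul _ (show Measurable fun u : ℝ => ENNReal.ofReal (h (u - x)) by have h2 := hh.meas; fun_prop)]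
      congr 1
      exact lintegral_sub_right_eq_self (fun u => ENNReal.ofReal (h u)) x
    rw [lintegral_congr this, lintegral_mul_const _ hf.measK]
    rfl
  have hfin : ∫⁻ u, I u ≠ ∞ := by rw [key]; exact ENNReal.mul_ne_top hf' hh'
  have hae : ∀ᵐ u, I u ≠ ∞ := (ae_lt_top hImeas hfin).mono fun u hu => hu.ne
  calc lint (convOn f h) = ∫⁻ u, ENNReal.ofReal ((I u).toReal) := by
        exact lintegral_congr fun u => by rw [conv_eq_lint hf hh]
    _ = ∫⁻ u, I u := lintegral_congr_ae (hae.mono fun u hu => ENNReal.ofReal_toReal hu)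
    _ = lint f * lint h := key

lemma Ker.integrable {f : ℝ → ℝ} (hf : Ker f) (hfin : lint f ≠ ∞) : Integrable f := by
  refine ⟨hf.meas.aestronglyMeasurable, ?_⟩
  rw [HasFiniteIntegral]
  have : ∀ x, ‖f x‖ₑ = ENNReal.ofReal (f x) := fun x => by
    rw [← ofReal_norm, Real.norm_eq_abs, abs_of_nonneg (hf.nonneg x)]
  rw [lintegral_congr this]
  exact hfin.lt_top

lemma integral_eq_lint {f : ℝ → ℝ} (hf : Ker f) : ∫ x, f x = (lint f).toReal := by
  rw [MeasureTheory.integral_eq_lintegral_of_nonneg_ae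
    (Filter.Eventually.of_forall hf.nonneg) hf.meas.aestronglyMeasurable]
  rfl

end CGT
namespace CGT

lemma conv_comm (f h : ℝ → ℝ) (u : ℝ) : convOn f h u = convOn h f u := by
  have key := intervalIntegral.integral_comp_sub_left (a := (0:ℝ)) (b := u)
    (fun x => f x * h (u - x)) u
  simp only [sub_zero, sub_self, _root_.sub_sub_cancel] at key
  rw [convOn, convOn, ← key]
  apply intervalIntegral.integral_congr
  intro x _
  dsimp only
  ring

lemma conv_congr_fst {a a' k : ℝ → ℝ} (hk0 : ∀ x ≤ 0, k x = 0)
    (h : ∀ x > 0, a x = a' x) (u : ℝ) : convOn a k u = convOn a' k u := by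
  rcases le_or_gt u 0 with hu | hu
  · rw [convOn, convOn, intervalIntegral.integral_of_ge hu, intervalIntegral.integral_of_ge hu]
    congr 1
    refine MeasureTheory.setIntegral_congr_fun measurableSet_Ioc fun x hx => ?_
    rw [hk0 (u - x) (by rcases hx with ⟨h1, _⟩; linarith), mul_zero, mul_zero]
  · rw [convOn, convOn, intervalIntegral.integral_of_le hu.le, intervalIntegral.integral_of_le hu.le]
    refine MeasureTheory.setIntegral_congr_fun measurableSet_Ioc fun x hx => ?_
    rw [h x hx.1]

lemma conv_congr_snd {k b b' : ℝ → ℝ} (hk0 : ∀ x ≤ 0, k x = 0)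
    (h : ∀ x > 0, b x = b' x) (u : ℝ) : convOn k b u = convOn k b' u := by
  rcases le_or_gt u 0 with hu | hu
  · rw [convOn, convOn, intervalIntegral.integral_of_ge hu, intervalIntegral.integral_of_ge hu]
    congr 1
    refine MeasureTheory.setIntegral_congr_fun measurableSet_Ioc fun x hx => ?_
    rw [hk0 x hx.2, zero_mul, zero_mul]
  · rw [convOn, convOn, intervalIntegral.integral_of_le hu.le, intervalIntegral.integral_of_le hu.le]
    refine MeasureTheory.setIntegral_congr_ae measurableSet_Ioc ?_
    have hne : ∀ᵐ x : ℝ, x ≠ u := by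
      refine (ae_iff).2 ?_
      have : {x : ℝ | ¬ x ≠ u} = {u} := by ext x; simp
      rw [this]
      exact measure_singleton u
    filter_upwards [hne] with x hxu hx
    have hxu' : x < u := lt_of_le_of_ne hx.2 hxu
    rw [h (u - x) (by linarith)]

lemma lint_inner {f h : ℝ → ℝ} (hf : Ker f) (hh : Ker h) :
    ∫⁻ u, (∫⁻ x, ENNReal.ofReal (f x) * ENNReal.ofReal (h (u - x))) = lint f * lint h := by
  have hm : Measurable fun q : ℝ × ℝ =>
      ENNReal.ofReal (f q.2) * ENNReal.ofReal (h (q.1 - q.2)) :=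
    (hf.measK.comp measurable_snd).mul
      (hh.measK.comp (measurable_fst.sub measurable_snd))
  rw [lintegral_lintegral_swap (hm.aemeasurable)]
  have : ∀ x : ℝ, ∫⁻ u, ENNReal.ofReal (f x) * ENNReal.ofReal (h (u - x)) =
      ENNReal.ofReal (f x) * lint h := by
    intro x
    rw [lintegral_const_mul _ (show Measurable fun u : ℝ => ENNReal.ofReal (h (u - x)) by
      have h2 := hh.meas; fun_prop)]
    congr 1
    exact lintegral_sub_right_eq_self (fun u => ENNReal.ofReal (h u)) x
  rw [lintegral_congr this, lintegral_mul_const _ hf.measK]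
  rfl

lemma conv_swap {a b c : ℝ → ℝ} (ha : Ker a) (hb : Ker b) (hc : Ker c)
    (ha1 : ∀ x, a x ≤ 1) (hbf : lint b ≠ ∞) (hcf : lint c ≠ ∞) (u : ℝ) :
    convOn a (convOn b c) u = convOn b (convOn a c) u := by
  have hmBC : Measurable fun q : ℝ × ℝ =>
      ENNReal.ofReal (b q.2) * ENNReal.ofReal (c (q.1 - q.2)) :=
    (hb.measK.comp measurable_snd).mul (hc.measK.comp (measurable_fst.sub measurable_snd))
  have hJmeas : Measurable fun t : ℝ => ∫⁻ y, ENNReal.ofReal (b y) * ENNReal.ofReal (c (t - y)) :=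
    hmBC.lintegral_prod_right'
  have hJfin : (∫⁻ t : ℝ, ∫⁻ y, ENNReal.ofReal (b y) * ENNReal.ofReal (c (t - y))) ≠ ∞ := by
    rw [lint_inner hb hc]
    exact ENNReal.mul_ne_top hbf hcf
  have hJae : ∀ᵐ t : ℝ, (∫⁻ y, ENNReal.ofReal (b y) * ENNReal.ofReal (c (t - y))) ≠ ∞ :=
    (ae_lt_top hJmeas hJfin).mono fun t ht => ht.ne
  have L1 : convOn a (convOn b c) u
      = (∫⁻ x, ENNReal.ofReal (convOn b c x) * ENNReal.ofReal (a (u - x))).toReal := by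
    rw [conv_comm, conv_eq_lint (hb.conv hc) ha]
  have L2 : (∫⁻ x, ENNReal.ofReal (convOn b c x) * ENNReal.ofReal (a (u - x)))
      = ∫⁻ x, (∫⁻ y, ENNReal.ofReal (b y) * ENNReal.ofReal (c (x - y))) *
          ENNReal.ofReal (a (u - x)) := by
    refine lintegral_congr_ae (hJae.mono fun x hx => ?_)
    dsimp only
    rw [conv_eq_lint hb hc, ENNReal.ofReal_toReal hx]
  have L3 : (∫⁻ x, (∫⁻ y, ENNReal.ofReal (b y) * ENNReal.ofReal (c (x - y))) *
          ENNReal.ofReal (a (u - x)))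
      = ∫⁻ y, ENNReal.ofReal (b y) *
          ∫⁻ z, ENNReal.ofReal (c z) * ENNReal.ofReal (a (u - y - z)) := by
    have s1 : ∀ x : ℝ, (∫⁻ y, ENNReal.ofReal (b y) * ENNReal.ofReal (c (x - y))) *
        ENNReal.ofReal (a (u - x))
        = ∫⁻ y, ENNReal.ofReal (b y) * ENNReal.ofReal (c (x - y)) *
            ENNReal.ofReal (a (u - x)) := by
      intro x
      exact (lintegral_mul_const _ (show Measurable fun y =>
        ENNReal.ofReal (b y) * ENNReal.ofReal (c (x - y)) by
          have := hb.meas; have := hc.meas; fun_prop)).symm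
    rw [lintegral_congr s1]
    rw [lintegral_lintegral_swap (by
      apply Measurable.aemeasurable
      have := ha.meas; have := hb.meas; have := hc.meas
      fun_prop)]
    refine lintegral_congr fun y => ?_
    have s2 : ∀ x : ℝ, ENNReal.ofReal (b y) * ENNReal.ofReal (c (x - y)) *
        ENNReal.ofReal (a (u - x))
        = ENNReal.ofReal (b y) * (ENNReal.ofReal (c (x - y)) * ENNReal.ofReal (a (u - x))) :=
      fun x => mul_assoc _ _ _
    rw [lintegral_congr s2, lintegral_const_mul _ (show Measurable fun x =>
      ENNReal.ofReal (c (x - y)) * ENNReal.ofReal (a (u - x)) by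
        have := ha.meas; have := hc.meas; fun_prop)]
    congr 1
    have s3 := lintegral_add_right_eq_self (μ := volume)
      (fun x => ENNReal.ofReal (c (x - y)) * ENNReal.ofReal (a (u - x))) y
    rw [← s3]
    refine lintegral_congr fun z => ?_
    have e1 : z + y - y = z := by ring
    have e2 : u - (z + y) = u - y - z := by ring
    rw [e1, e2]
  have hKfin : ∀ y : ℝ, (∫⁻ z, ENNReal.ofReal (c z) * ENNReal.ofReal (a (u - y - z))) ≠ ∞ := by
    intro y
    have hle : (∫⁻ z, ENNReal.ofReal (c z) * ENNReal.ofReal (a (u - y - z))) ≤ lint c := by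
      refine lintegral_mono fun z => ?_
      calc ENNReal.ofReal (c z) * ENNReal.ofReal (a (u - y - z))
          ≤ ENNReal.ofReal (c z) * 1 :=
            mul_le_mul_right (ENNReal.ofReal_le_one.2 (ha1 _)) _
        _ = ENNReal.ofReal (c z) := mul_one _
    exact fun hcontra => hcf (top_le_iff.1 (hcontra ▸ hle))
  have L4 : ∀ y : ℝ, (∫⁻ z, ENNReal.ofReal (c z) * ENNReal.ofReal (a (u - y - z)))
      = ENNReal.ofReal (convOn c a (u - y)) := by
    intro y
    rw [conv_eq_lint hc ha, ENNReal.ofReal_toReal (hKfin y)]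
  have R1 : convOn b (convOn a c) u
      = (∫⁻ y, ENNReal.ofReal (b y) * ENNReal.ofReal (convOn c a (u - y))).toReal := by
    have hacca : convOn a c = convOn c a := funext fun t => conv_comm a c t
    rw [hacca, conv_eq_lint hb (hc.conv ha)]
  rw [L1, L2, L3, R1]
  congr 1
  exact lintegral_congr fun y => by rw [L4 y]

lemma setLIntegral_shift (Φ : ℝ → ℝ≥0∞) (u x : ℝ) :
    ∫⁻ y in Set.Ioi u, Φ (y - x) = ∫⁻ z in Set.Ioi (u - x), Φ z := by
  rw [← lintegral_indicator measurableSet_Ioi, ← lintegral_indicator measurableSet_Ioi]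
  have key : ∀ y : ℝ, (Set.Ioi u).indicator (fun y => Φ (y - x)) y
      = (Set.Ioi (u - x)).indicator Φ (y - x) := by
    intro y
    by_cases hy : y ∈ Set.Ioi u
    · rw [Set.indicator_of_mem hy, Set.indicator_of_mem
        (show y - x ∈ Set.Ioi (u - x) by
          simp only [Set.mem_Ioi] at hy ⊢; linarith)]
    · rw [Set.indicator_of_notMem hy, Set.indicator_of_notMem
        (show y - x ∉ Set.Ioi (u - x) by
          simp only [Set.mem_Ioi] at hy ⊢; intro hcon; exact hy (by linarith))]
  rw [lintegral_congr key]
  exact lintegral_sub_right_eq_self ((Set.Ioi (u - x)).indicator Φ) x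

end CGT
namespace CGT

lemma tail_eq {g : ℝ → ℝ} (hg : Ker g) (hint : lint g = 1) (Gbar : ℝ → ℝ)
    (hGbar : ∀ u, Gbar u = ∫ y in Set.Ioi u, g y) {u : ℝ} (hu : 0 ≤ u) :
    ∫ y in Set.Ioi u, convOn g g y = Gbar u + convOn g Gbar u := by
  have hgInt : Integrable g := hg.integrable (by rw [hint]; exact ENNReal.one_ne_top)
  have hoG : ∀ v : ℝ, (∫⁻ z in Set.Ioi v, ENNReal.ofReal (g z)) = ENNReal.ofReal (Gbar v) := by
    intro v
    rw [hGbar v, MeasureTheory.ofReal_integral_eq_lintegral_ofReal hgInt.integrableOn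
      (ae_of_all _ hg.nonneg)]
  have hGnn : ∀ v, 0 ≤ Gbar v := fun v => by
    rw [hGbar v]; exact setIntegral_nonneg measurableSet_Ioi fun x _ => hg.nonneg x
  have hGanti : Antitone Gbar := by
    intro v w hvw
    rw [hGbar v, hGbar w]
    exact setIntegral_mono_set hgInt.integrableOn (ae_of_all _ hg.nonneg)
      (HasSubset.Subset.eventuallyLE (Set.Ioi_subset_Ioi hvw))
  have hGmeas : Measurable Gbar := hGanti.measurable
  have hGone : ∀ v ≤ (0:ℝ), ENNReal.ofReal (Gbar v) = 1 := by
    intro v hv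
    rw [← hoG v]
    have split := lintegral_add_compl (μ := volume) (fun z => ENNReal.ofReal (g z))
      (measurableSet_Ioi (a := v))
    have hcompl : (∫⁻ z in (Set.Ioi v)ᶜ, ENNReal.ofReal (g z)) = 0 := by
      rw [Set.compl_Ioi]
      have h0 : (∫⁻ z in Set.Iic v, ENNReal.ofReal (g z))
          = ∫⁻ _z in Set.Iic v, (0:ℝ≥0∞) :=
        setLIntegral_congr_fun measurableSet_Iic (fun z hz => by
          rw [hg.zero z (le_trans hz hv)]; simp)
      rw [h0, lintegral_zero]
    rw [hcompl, add_zero] at split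
    exact split.trans hint
  have hGle1 : ∀ v, Gbar v ≤ 1 := by
    intro v
    have : ENNReal.ofReal (Gbar v) ≤ 1 := by
      rw [← hoG v, ← hint]
      exact lintegral_mono' Measure.restrict_le_self (le_refl _)
    exact ENNReal.ofReal_le_one.1 this
  have hJmeas : Measurable fun y : ℝ =>
      ∫⁻ x, ENNReal.ofReal (g x) * ENNReal.ofReal (g (y - x)) :=
    ((hg.measK.comp measurable_snd).mul
      (hg.measK.comp (measurable_fst.sub measurable_snd))).lintegral_prod_right'
  have hIoc : IntegrableOn (fun x => g x * Gbar (u - x)) (Set.Ioc 0 u) := by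
    refine hgInt.integrableOn.mono' ?_ (ae_of_all _ fun x => ?_)
    · exact Measurable.aestronglyMeasurable (by have := hg.meas; fun_prop)
    · rw [Real.norm_eq_abs, abs_of_nonneg (mul_nonneg (hg.nonneg x) (hGnn _))]
      exact mul_le_of_le_one_right (hg.nonneg x) (hGle1 _)
  have key : (∫⁻ y in Set.Ioi u, ∫⁻ x, ENNReal.ofReal (g x) * ENNReal.ofReal (g (y - x)))
      = ENNReal.ofReal (Gbar u) + ENNReal.ofReal (convOn g Gbar u) := by
    rw [lintegral_lintegral_swap (by
      apply Measurable.aemeasurable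
      have := hg.meas
      fun_prop)]
    have inner : ∀ x : ℝ,
        (∫⁻ y in Set.Ioi u, ENNReal.ofReal (g x) * ENNReal.ofReal (g (y - x)))
        = ENNReal.ofReal (g x) * ENNReal.ofReal (Gbar (u - x)) := by
      intro x
      rw [lintegral_const_mul _ (show Measurable fun y : ℝ => ENNReal.ofReal (g (y - x)) by
        have := hg.meas; fun_prop)]
      rw [setLIntegral_shift (fun z => ENNReal.ofReal (g z)) u x, hoG (u - x)]
    rw [lintegral_congr inner]
    have hIic : (∫⁻ x in Set.Iic (0:ℝ),
        ENNReal.ofReal (g x) * ENNReal.ofReal (Gbar (u - x))) = 0 := by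
      have h0 : (∫⁻ x in Set.Iic (0:ℝ),
          ENNReal.ofReal (g x) * ENNReal.ofReal (Gbar (u - x)))
          = ∫⁻ _x in Set.Iic (0:ℝ), (0:ℝ≥0∞) :=
        setLIntegral_congr_fun measurableSet_Iic (fun x hx => by
          rw [hg.zero x hx]; simp)
      rw [h0, lintegral_zero]
    have hIoiu : (∫⁻ x in Set.Ioi u,
        ENNReal.ofReal (g x) * ENNReal.ofReal (Gbar (u - x))) = ENNReal.ofReal (Gbar u) := by
      have h1 : (∫⁻ x in Set.Ioi u,
          ENNReal.ofReal (g x) * ENNReal.ofReal (Gbar (u - x)))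
          = ∫⁻ x in Set.Ioi u, ENNReal.ofReal (g x) :=
        setLIntegral_congr_fun measurableSet_Ioi (fun x hx => by
          rw [hGone (u - x) (by simp only [Set.mem_Ioi] at hx; linarith), mul_one])
      rw [h1, hoG u]
    have hIocu : (∫⁻ x in Set.Ioc (0:ℝ) u,
        ENNReal.ofReal (g x) * ENNReal.ofReal (Gbar (u - x)))
        = ENNReal.ofReal (convOn g Gbar u) := by
      rw [convOn, intervalIntegral.integral_of_le hu,
        MeasureTheory.ofReal_integral_eq_lintegral_ofReal hIoc
          (ae_of_all _ fun x => mul_nonneg (hg.nonneg x) (hGnn _))]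
      exact lintegral_congr fun x => (ENNReal.ofReal_mul (hg.nonneg x)).symm
    calc (∫⁻ x, ENNReal.ofReal (g x) * ENNReal.ofReal (Gbar (u - x)))
        = (∫⁻ x in Set.Iic (0:ℝ), ENNReal.ofReal (g x) * ENNReal.ofReal (Gbar (u - x)))
          + ∫⁻ x in (Set.Iic (0:ℝ))ᶜ, ENNReal.ofReal (g x) * ENNReal.ofReal (Gbar (u - x)) :=
          (lintegral_add_compl _ measurableSet_Iic).symm
      _ = ∫⁻ x in Set.Ioi (0:ℝ), ENNReal.ofReal (g x) * ENNReal.ofReal (Gbar (u - x)) := by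
          rw [hIic, zero_add, Set.compl_Iic]
      _ = (∫⁻ x in Set.Ioc (0:ℝ) u, ENNReal.ofReal (g x) * ENNReal.ofReal (Gbar (u - x)))
          + ∫⁻ x in Set.Ioi u, ENNReal.ofReal (g x) * ENNReal.ofReal (Gbar (u - x)) := by
          rw [← Set.Ioc_union_Ioi_eq_Ioi hu,
            lintegral_union measurableSet_Ioi (Set.Ioc_disjoint_Ioi le_rfl)]
      _ = ENNReal.ofReal (Gbar u) + ENNReal.ofReal (convOn g Gbar u) := by
          rw [hIocu, hIoiu, add_comm]
  have hconvnn : 0 ≤ convOn g Gbar u := by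
    rw [convOn]
    exact intervalIntegral.integral_nonneg hu fun x _ => mul_nonneg (hg.nonneg x) (hGnn _)
  have haefin : ∀ᵐ y ∂(volume.restrict (Set.Ioi u)),
      (∫⁻ x, ENNReal.ofReal (g x) * ENNReal.ofReal (g (y - x))) ≠ ∞ :=
    (ae_lt_top hJmeas (by
      rw [key]
      exact ENNReal.add_ne_top.2 ⟨ENNReal.ofReal_ne_top, ENNReal.ofReal_ne_top⟩)).mono
      fun y hy => hy.ne
  rw [MeasureTheory.integral_eq_lintegral_of_nonneg_ae
    (ae_of_all _ fun y => (hg.conv hg).nonneg y) ((hg.conv hg).meas.aestronglyMeasurable)]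
  have hcongr : (∫⁻ y in Set.Ioi u, ENNReal.ofReal (convOn g g y))
      = ∫⁻ y in Set.Ioi u, ∫⁻ x, ENNReal.ofReal (g x) * ENNReal.ofReal (g (y - x)) :=
    lintegral_congr_ae (haefin.mono fun y hy => by
      dsimp only
      rw [conv_eq_lint hg hg, ENNReal.ofReal_toReal hy])
  rw [hcongr, key, ENNReal.toReal_add ENNReal.ofReal_ne_top ENNReal.ofReal_ne_top,
    ENNReal.toReal_ofReal (hGnn u), ENNReal.toReal_ofReal hconvnn]

end CGT
open CGT in
/-- Compound geometric tail asymptotics for a subexponential distribution. -/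
theorem compound_geometric_tail_asymptotics (g : ℝ → ℝ) (hmeas : Measurable g)
    (hnn : ∀ x, 0 ≤ g x) (hg0 : ∀ x ≤ 0, g x = 0)
    (hdens : ∫ x in Set.Ioi (0:ℝ), g x = 1)
    (Gbar : ℝ → ℝ) (hGbar : ∀ u, Gbar u = ∫ y in Set.Ioi u, g y)
    (hsubexp : Filter.Tendsto (fun x => (∫ y in Set.Ioi x, convOn g g y) / Gbar x)
      Filter.atTop (nhds 2))
    (p : ℝ) (hp : p ∈ Set.Ioo (0:ℝ) 1)
    (F : ℝ → ℝ)
    (hF : ∀ u, F u = p * Gbar u + ∑' n : ℕ, p ^ (n + 2) * convOn Gbar (iterConv g n) u) :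
    Filter.Tendsto (fun u => F u / Gbar u) Filter.atTop (nhds (p / (1 - p))) := by
  classical
  obtain ⟨hp0, hp1⟩ := hp
  have Kg : Ker g := ⟨hmeas, hnn, hg0⟩
  -- integrability of g
  have hgIntOn : IntegrableOn g (Set.Ioi (0:ℝ)) := by
    by_contra hcon
    rw [MeasureTheory.integral_undef hcon] at hdens
    norm_num at hdens
  have hgind : g = (Set.Ioi (0:ℝ)).indicator g := by
    funext x
    rcases le_or_gt x 0 with hx | hx
    · rw [Set.indicator_of_notMem (by simpa using hx), hg0 x hx]
    · rw [Set.indicator_of_mem (by simpa using hx)]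
  have hgInt : Integrable g := by
    rw [hgind]
    exact (integrable_indicator_iff measurableSet_Ioi).2 hgIntOn
  have hintg : ∫ x, g x = 1 := by
    rw [← MeasureTheory.setIntegral_eq_integral_of_forall_compl_eq_zero
      (s := Set.Ioi (0:ℝ)) (fun x hx => hg0 x (by simpa using hx))]
    exact hdens
  have hlintg : lint g = 1 := by
    rw [lint, ← MeasureTheory.ofReal_integral_eq_lintegral_ofReal hgInt (ae_of_all _ hnn),
      hintg, ENNReal.ofReal_one]
  have hlintg' : lint g ≠ ∞ := by rw [hlintg]; exact ENNReal.one_ne_top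
  -- iterated convolutions
  have Kh : ∀ n, Ker (iterConv g n) := by
    intro n
    induction n with
    | zero => exact Kg
    | succ n ih => exact Kg.conv ih
  have hlinth : ∀ n, lint (iterConv g n) ≤ 1 := by
    intro n
    induction n with
    | zero => rw [show iterConv g 0 = g from rfl, hlintg]
    | succ n ih =>
      have heq : lint (iterConv g (n + 1)) = lint g * lint (iterConv g n) :=
        lint_conv Kg (Kh n) hlintg' (fun hcon => by rw [hcon] at ih; simp at ih)
      rw [heq, hlintg, one_mul]
      exact ih
  have hhfin : ∀ n, lint (iterConv g n) ≠ ∞ := fun n hcon => by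
    have := hlinth n; rw [hcon] at this; simp at this
  -- Gbar basic properties
  have hGnn : ∀ v, 0 ≤ Gbar v := fun v => by
    rw [hGbar v]; exact setIntegral_nonneg measurableSet_Ioi fun x _ => hnn x
  have hGanti : Antitone Gbar := by
    intro v w hvw
    rw [hGbar v, hGbar w]
    exact setIntegral_mono_set hgInt.integrableOn (ae_of_all _ hnn)
      (HasSubset.Subset.eventuallyLE (Set.Ioi_subset_Ioi hvw))
  have hGmeas : Measurable Gbar := hGanti.measurable
  have hG0 : Gbar 0 = 1 := by rw [hGbar 0]; exact hdens
  have hGsub : ∀ a b : ℝ, a ≤ b → ∫ x in Set.Ioc a b, g x = Gbar a - Gbar b := by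
    intro a b hab
    have h1 : Gbar a = (∫ x in Set.Ioc a b, g x) + Gbar b := by
      rw [hGbar a, hGbar b, ← MeasureTheory.setIntegral_union (Set.Ioc_disjoint_Ioi le_rfl)
        measurableSet_Ioi hgInt.integrableOn hgInt.integrableOn, Set.Ioc_union_Ioi_eq_Ioi hab]
    linarith
  have hGone : ∀ v ≤ (0:ℝ), Gbar v = 1 := by
    intro v hv
    have h1 : ∫ x in Set.Ioc v 0, g x = 0 := by
      rw [MeasureTheory.setIntegral_congr_fun measurableSet_Ioc
        (fun x hx => hg0 x hx.2 : ∀ x ∈ Set.Ioc v (0:ℝ), g x = (fun _ => (0:ℝ)) x)]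
      simp
    have h2 := hGsub v 0 hv
    rw [h1] at h2
    linarith [hG0]
  have hGle1 : ∀ v, Gbar v ≤ 1 := by
    intro v
    rcases le_total v 0 with hv | hv
    · rw [hGone v hv]
    · calc Gbar v ≤ Gbar 0 := hGanti hv
        _ = 1 := hG0
  have hGint_ab : ∀ a b : ℝ, a ≤ b → ∫ x in a..b, g x = Gbar a - Gbar b := by
    intro a b hab
    rw [intervalIntegral.integral_of_le hab, hGsub a b hab]
  have hGtend : Tendsto Gbar atTop (𝓝 0) := by
    have h1 : Tendsto (fun b => ∫ x in (0:ℝ)..b, g x) atTop (𝓝 1) := by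
      have := MeasureTheory.intervalIntegral_tendsto_integral_Ioi 0 hgIntOn tendsto_id
      rwa [hdens] at this
    have h2 : Tendsto (fun b => 1 - ∫ x in (0:ℝ)..b, g x) atTop (𝓝 (1 - 1)) :=
      tendsto_const_nhds.sub h1
    rw [sub_self] at h2
    refine h2.congr' ?_
    filter_upwards [eventually_ge_atTop (0:ℝ)] with b hb
    rw [hGint_ab 0 b hb, hG0]
    ring
  -- positivity of Gbar
  have hGpos : ∀ v, 0 < Gbar v := by
    by_contra hcon
    push_neg at hcon
    obtain ⟨v, hv⟩ := hcon
    have hv0 : Gbar v = 0 := le_antisymm hv (hGnn v)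
    have hvpos : 0 < v := by
      by_contra hc
      push_neg at hc
      rw [hGone v hc] at hv0
      norm_num at hv0
    have hgae : g =ᵐ[volume.restrict (Set.Ioi v)] 0 := by
      refine (MeasureTheory.setIntegral_eq_zero_iff_of_nonneg_ae
        (ae_of_all _ hnn) hgInt.integrableOn).1 ?_
      rw [← hGbar v]; exact hv0
    set Ψ : ℝ → ℝ := (Set.Ioi v).indicator g with hΨdef
    have KΨ : Ker Ψ :=
      ⟨hmeas.indicator measurableSet_Ioi, fun x => Set.indicator_nonneg (fun y _ => hnn y) x,
        fun x hx => Set.indicator_of_notMem (by simp only [Set.mem_Ioi]; intro h; linarith) _⟩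
    have hlintΨ : lint Ψ = 0 := by
      rw [lint]
      have e1 : ∀ x, ENNReal.ofReal (Ψ x) = (Set.Ioi v).indicator
          (fun z => ENNReal.ofReal (g z)) x := by
        intro x
        by_cases hx : x ∈ Set.Ioi v
        · rw [hΨdef, Set.indicator_of_mem hx, Set.indicator_of_mem hx]
        · rw [hΨdef, Set.indicator_of_notMem hx, Set.indicator_of_notMem hx,
            ENNReal.ofReal_zero]
      rw [lintegral_congr e1, lintegral_indicator measurableSet_Ioi]
      have e2 : ∀ᵐ x ∂(volume.restrict (Set.Ioi v)), ENNReal.ofReal (g x) = 0 :=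
        hgae.mono fun x hx => by
          simp only [Pi.zero_apply] at hx
          rw [hx]; simp
      rw [lintegral_congr_ae e2]
      simp
    have hinner := lint_inner Kg KΨ
    rw [hlintg, hlintΨ, one_mul] at hinner
    have hmJ : Measurable fun y : ℝ =>
        ∫⁻ x, ENNReal.ofReal (g x) * ENNReal.ofReal (Ψ (y - x)) :=
      ((Kg.measK.comp measurable_snd).mul
        (KΨ.measK.comp (measurable_fst.sub measurable_snd))).lintegral_prod_right'
    have haeJ : ∀ᵐ y : ℝ, (∫⁻ x, ENNReal.ofReal (g x) * ENNReal.ofReal (Ψ (y - x))) = 0 :=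
      (lintegral_eq_zero_iff hmJ).1 hinner
    have hconv0 : ∀ᵐ y : ℝ, 2 * v < y → convOn g g y = 0 := by
      refine haeJ.mono fun y hy hy2 => ?_
      rw [conv_eq_lint Kg Kg]
      have hIoi0 : (∫⁻ x in Set.Ioi v, ENNReal.ofReal (g x) * ENNReal.ofReal (g (y - x)))
          = 0 := by
        have h0 : (fun x => ENNReal.ofReal (g x) * ENNReal.ofReal (g (y - x)))
            =ᵐ[volume.restrict (Set.Ioi v)] 0 := hgae.mono fun x hx => by
          simp only [Pi.zero_apply] at hx ⊢
          rw [hx]; simp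
        rw [lintegral_congr_ae h0]; simp
      have hIic0 : (∫⁻ x in Set.Iic v, ENNReal.ofReal (g x) * ENNReal.ofReal (g (y - x)))
          ≤ 0 := by
        have heq : ∀ x ∈ Set.Iic v, ENNReal.ofReal (g x) * ENNReal.ofReal (g (y - x))
            = ENNReal.ofReal (g x) * ENNReal.ofReal (Ψ (y - x)) := by
          intro x hx
          simp only [Set.mem_Iic] at hx
          rw [hΨdef, Set.indicator_of_mem (show y - x ∈ Set.Ioi v by
            simp only [Set.mem_Ioi]; linarith)]
        calc (∫⁻ x in Set.Iic v, ENNReal.ofReal (g x) * ENNReal.ofReal (g (y - x)))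
            = ∫⁻ x in Set.Iic v, ENNReal.ofReal (g x) * ENNReal.ofReal (Ψ (y - x)) :=
              setLIntegral_congr_fun measurableSet_Iic heq
          _ ≤ ∫⁻ x, ENNReal.ofReal (g x) * ENNReal.ofReal (Ψ (y - x)) :=
              lintegral_mono' Measure.restrict_le_self (le_refl _)
          _ = 0 := hy
      have hsplit := lintegral_add_compl (μ := volume)
        (fun x => ENNReal.ofReal (g x) * ENNReal.ofReal (g (y - x)))
        (measurableSet_Iic (a := v))
      have hzero : (∫⁻ x, ENNReal.ofReal (g x) * ENNReal.ofReal (g (y - x))) = 0 := by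
        rw [← hsplit, Set.compl_Iic, hIoi0, add_zero]
        exact le_antisymm hIic0 zero_le
      rw [hzero]
      simp
    have htail0 : ∀ x : ℝ, 2 * v ≤ x → (∫ y in Set.Ioi x, convOn g g y) = 0 := by
      intro x hx
      have hae' : ∀ᵐ y ∂(volume.restrict (Set.Ioi x)), convOn g g y = 0 := by
        have h1 : ∀ᵐ y ∂(volume.restrict (Set.Ioi x)), 2 * v < y → convOn g g y = 0 :=
          ae_restrict_of_ae hconv0
        have h2 : ∀ᵐ y ∂(volume.restrict (Set.Ioi x)), y ∈ Set.Ioi x :=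
          ae_restrict_mem measurableSet_Ioi
        filter_upwards [h1, h2] with y hy1 hy2
        exact hy1 (by simp only [Set.mem_Ioi] at hy2; linarith)
      exact MeasureTheory.integral_eq_zero_of_ae hae'
    have hzero : Tendsto (fun x => (∫ y in Set.Ioi x, convOn g g y) / Gbar x) atTop (𝓝 0) := by
      refine tendsto_const_nhds.congr' ?_
      filter_upwards [eventually_ge_atTop (2*v)] with x hx
      rw [htail0 x hx, zero_div]
    have := tendsto_nhds_unique hsubexp hzero
    norm_num at this
  -- integrability helper
  have hbdd_int : ∀ b : ℝ → ℝ, Measurable b → (∀ x, 0 ≤ b x) → (∀ x, b x ≤ 1) →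
      ∀ u : ℝ, Integrable (fun y => g y * b (u - y)) := by
    intro b hbm hb0 hb1 u
    refine hgInt.mono' (Measurable.aestronglyMeasurable (by fun_prop))
      (ae_of_all _ fun y => ?_)
    rw [Real.norm_eq_abs, abs_of_nonneg (mul_nonneg (hnn y) (hb0 _))]
    exact mul_le_of_le_one_right (hnn y) (hb1 _)
  have hIGbar : ∀ u a b : ℝ, IntervalIntegrable (fun x => g x * Gbar (u - x)) volume a b :=
    fun u a b => (hbdd_int Gbar hGmeas hGnn hGle1 u).intervalIntegrable
  -- base limit L0
  have L0 : Tendsto (fun u => convOn g Gbar u / Gbar u) atTop (𝓝 1) := by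
    have h2 : Tendsto (fun u => (∫ y in Set.Ioi u, convOn g g y) / Gbar u - 1)
        atTop (𝓝 (2 - 1)) := hsubexp.sub_const 1
    norm_num at h2
    refine h2.congr' ?_
    filter_upwards [eventually_ge_atTop (0:ℝ)] with u hu
    rw [tail_eq Kg hlintg Gbar hGbar hu, add_div, div_self (hGpos u).ne']
    ring
  -- long-tailedness (difference form)
  have LTd : ∀ A : ℝ, 0 ≤ A →
      Tendsto (fun u => (Gbar (u - A) - Gbar u) / Gbar u) atTop (𝓝 0) := by
    intro A hA
    have hGA := hGpos A
    have hineq : ∀ u, A ≤ u →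
        (1 - Gbar A) * Gbar u + (Gbar A - Gbar u) * Gbar (u - A) ≤ convOn g Gbar u := by
      intro u hu
      have hu0 : (0:ℝ) ≤ u := le_trans hA hu
      have hsplit : convOn g Gbar u = (∫ x in (0:ℝ)..A, g x * Gbar (u - x))
          + ∫ x in A..u, g x * Gbar (u - x) := by
        rw [convOn]
        exact (intervalIntegral.integral_add_adjacent_intervals
          (hIGbar u 0 A) (hIGbar u A u)).symm
      have hp1 : (1 - Gbar A) * Gbar u ≤ ∫ x in (0:ℝ)..A, g x * Gbar (u - x) := by
        have hmono : ∫ x in (0:ℝ)..A, g x * Gbar u ≤ ∫ x in (0:ℝ)..A, g x * Gbar (u - x) := by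
          apply intervalIntegral.integral_mono_on hA
            ((hgInt.mul_const _).intervalIntegrable) (hIGbar u 0 A)
          intro x hx
          exact mul_le_mul_of_nonneg_left (hGanti (by linarith [hx.1] : u - x ≤ u)) (hnn x)
        calc (1 - Gbar A) * Gbar u = (∫ x in (0:ℝ)..A, g x) * Gbar u := by
              rw [hGint_ab 0 A hA, hG0]
          _ = ∫ x in (0:ℝ)..A, g x * Gbar u := (intervalIntegral.integral_mul_const _ _).symm
          _ ≤ _ := hmono
      have hp2 : (Gbar A - Gbar u) * Gbar (u - A) ≤ ∫ x in A..u, g x * Gbar (u - x) := by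
        have hmono : ∫ x in A..u, g x * Gbar (u - A) ≤ ∫ x in A..u, g x * Gbar (u - x) := by
          apply intervalIntegral.integral_mono_on hu
            ((hgInt.mul_const _).intervalIntegrable) (hIGbar u A u)
          intro x hx
          exact mul_le_mul_of_nonneg_left (hGanti (by linarith [hx.1] : u - x ≤ u - A)) (hnn x)
        calc (Gbar A - Gbar u) * Gbar (u - A) = (∫ x in A..u, g x) * Gbar (u - A) := by
              rw [hGint_ab A u hu]
          _ = ∫ x in A..u, g x * Gbar (u - A) := (intervalIntegral.integral_mul_const _ _).symm
          _ ≤ _ := hmono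
      linarith
    have hBt : Tendsto (fun u => (convOn g Gbar u / Gbar u - (1 - Gbar A)) / (Gbar A - Gbar u))
        atTop (𝓝 1) := by
      have h1 : Tendsto (fun u => convOn g Gbar u / Gbar u - (1 - Gbar A)) atTop
          (𝓝 (1 - (1 - Gbar A))) := L0.sub_const _
      have h2 : Tendsto (fun u => Gbar A - Gbar u) atTop (𝓝 (Gbar A - 0)) :=
        tendsto_const_nhds.sub hGtend
      have h3 := h1.div h2 (by rw [sub_zero]; exact hGA.ne')
      have e : (1 - (1 - Gbar A)) / (Gbar A - 0) = 1 := by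
        rw [sub_zero, _root_.sub_sub_cancel, div_self hGA.ne']
      rwa [e] at h3
    have hup : ∀ᶠ u in atTop, Gbar (u - A) / Gbar u
        ≤ (convOn g Gbar u / Gbar u - (1 - Gbar A)) / (Gbar A - Gbar u) := by
      have hev : ∀ᶠ u in atTop, Gbar u < Gbar A := hGtend.eventually_lt_const hGA
      filter_upwards [hev, eventually_ge_atTop A] with u h1 h2
      have hkey := hineq u h2
      rw [div_le_div_iff₀ (hGpos u) (by linarith)]
      have e : convOn g Gbar u / Gbar u * Gbar u = convOn g Gbar u :=
        div_mul_cancel₀ _ (hGpos u).ne'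
      nlinarith [hGnn (u - A), hGnn u]
    have hlow : ∀ᶠ u in atTop, (1:ℝ) ≤ Gbar (u - A) / Gbar u :=
      Eventually.of_forall fun u => (one_le_div (hGpos u)).2 (hGanti (by linarith))
    have hrt : Tendsto (fun u => Gbar (u - A) / Gbar u) atTop (𝓝 1) :=
      tendsto_of_tendsto_of_tendsto_of_le_of_le' tendsto_const_nhds hBt hlow hup
    have hfin := hrt.sub_const 1
    rw [sub_self] at hfin
    refine hfin.congr fun u => ?_
    rw [sub_div, div_self (hGpos u).ne']
  -- Kesten-type geometric bound
  set ε₀ : ℝ := (1 - p) / (2 * p) with hε₀def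
  have hε₀pos : 0 < ε₀ := div_pos (by linarith) (by linarith)
  obtain ⟨A₁, hA₁⟩ := eventually_atTop.1 ((Metric.tendsto_nhds.1 L0) ε₀ hε₀pos)
  set A : ℝ := max A₁ 0 with hAdef
  have hA0 : (0:ℝ) ≤ A := le_max_right _ _
  have hconv_le : ∀ u, A ≤ u → convOn g Gbar u ≤ (1 + ε₀) * Gbar u := by
    intro u hu
    have h1 := hA₁ u (le_trans (le_max_left _ _) hu)
    rw [Real.dist_eq, abs_lt] at h1
    have := (div_lt_iff₀ (hGpos u)).1 (by linarith [h1.2] : convOn g Gbar u / Gbar u < 1 + ε₀)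
    linarith
  set c0 : ℝ := max (1 + ε₀) (1 / Gbar A) with hc0def
  have hc0pos : 0 < c0 := lt_of_lt_of_le (by linarith) (le_max_left _ _)
  have hc0A : 1 / Gbar A ≤ c0 := le_max_right _ _
  have hc0ε : 1 + ε₀ ≤ c0 := le_max_left _ _
  have hc0low : ∀ u, u ≤ A → (1:ℝ) ≤ c0 * Gbar u := by
    intro u hu
    have h1 : Gbar A ≤ Gbar u := hGanti hu
    have hGA := hGpos A
    calc (1:ℝ) = (1 / Gbar A) * Gbar A := by field_simp
      _ ≤ c0 * Gbar u := by
          apply mul_le_mul hc0A h1 hGA.le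
          exact le_trans (by positivity) hc0A
  -- the kernels T n
  set Gb0 : ℝ → ℝ := (Set.Ioi (0:ℝ)).indicator Gbar with hGb0def
  have KGb0 : Ker Gb0 :=
    ⟨hGmeas.indicator measurableSet_Ioi,
      fun x => Set.indicator_nonneg (fun y _ => hGnn y) x,
      fun x hx => Set.indicator_of_notMem (by simp only [Set.mem_Ioi]; intro h; linarith) _⟩
  have hGb0eq : ∀ x, 0 < x → Gb0 x = Gbar x := fun x hx =>
    Set.indicator_of_mem (by simpa using hx) _
  have hGb0le1 : ∀ x, Gb0 x ≤ 1 := by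
    intro x
    by_cases hx : x ∈ Set.Ioi (0:ℝ)
    · rw [hGb0def, Set.indicator_of_mem hx]; exact hGle1 x
    · rw [hGb0def, Set.indicator_of_notMem hx]; norm_num
  set T : ℕ → ℝ → ℝ := fun n => convOn Gb0 (iterConv g n) with hTdef
  have hTeq : ∀ n u, convOn Gbar (iterConv g n) u = T n u := fun n u =>
    conv_congr_fst ((Kh n).zero) (fun x hx => (hGb0eq x hx).symm) u
  have KT : ∀ n, Ker (T n) := fun n => KGb0.conv (Kh n)
  have hT1 : ∀ n u, T n u ≤ 1 := by
    intro n u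
    have e1 : T n u = (∫⁻ x, ENNReal.ofReal (iterConv g n x)
        * ENNReal.ofReal (Gb0 (u - x))).toReal := by
      rw [hTdef]
      dsimp only
      rw [conv_comm, conv_eq_lint (Kh n) KGb0]
    rw [e1]
    have hb : (∫⁻ x, ENNReal.ofReal (iterConv g n x) * ENNReal.ofReal (Gb0 (u - x)))
        ≤ lint (iterConv g n) := by
      refine lintegral_mono fun x => ?_
      calc ENNReal.ofReal (iterConv g n x) * ENNReal.ofReal (Gb0 (u - x))
          ≤ ENNReal.ofReal (iterConv g n x) * 1 :=
            mul_le_mul_right (ENNReal.ofReal_le_one.2 (hGb0le1 _)) _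
        _ = ENNReal.ofReal (iterConv g n x) := mul_one _
    calc (∫⁻ x, ENNReal.ofReal (iterConv g n x) * ENNReal.ofReal (Gb0 (u - x))).toReal
        ≤ (lint (iterConv g n)).toReal := ENNReal.toReal_mono (hhfin n) hb
      _ ≤ (1:ℝ≥0∞).toReal := ENNReal.toReal_mono ENNReal.one_ne_top (hlinth n)
      _ = 1 := by simp
  have hTrec : ∀ n u, T (n + 1) u = convOn g (T n) u := by
    intro n u
    show convOn Gb0 (convOn g (iterConv g n)) u = _
    rw [conv_swap KGb0 Kg (Kh n) hGb0le1 hlintg' (hhfin n)]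
  have hT0 : ∀ u, T 0 u = convOn g Gbar u := by
    intro u
    show convOn Gb0 g u = _
    rw [conv_comm]
    exact conv_congr_snd hg0 (fun x hx => hGb0eq x hx) u
  have hITn : ∀ n u a b, IntervalIntegrable (fun y => g y * T n (u - y)) volume a b :=
    fun n u a b => (hbdd_int (T n) (KT n).meas (KT n).nonneg (hT1 n) u).intervalIntegrable
  -- Kesten's bound
  have Kesten : ∀ n u, T n u ≤ c0 * (1 + ε₀) ^ n * Gbar u := by
    intro n
    induction n with
    | zero =>
      intro u
      rcases le_or_gt u A with hu | hu
      · calc T 0 u ≤ 1 := hT1 0 u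
          _ ≤ c0 * Gbar u := hc0low u hu
          _ = c0 * (1 + ε₀) ^ 0 * Gbar u := by ring
      · rw [hT0 u]
        calc convOn g Gbar u ≤ (1 + ε₀) * Gbar u := hconv_le u hu.le
          _ ≤ c0 * (1 + ε₀) ^ 0 * Gbar u := by
            rw [pow_zero, mul_one]
            exact mul_le_mul_of_nonneg_right hc0ε (hGnn u)
    | succ n ih =>
      intro u
      rcases le_or_gt u A with hu | hu
      · have hpow : (1:ℝ) ≤ (1 + ε₀) ^ (n + 1) := one_le_pow₀ (by linarith)
        calc T (n + 1) u ≤ 1 := hT1 _ _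
          _ ≤ c0 * Gbar u := hc0low u hu
          _ = c0 * Gbar u * 1 := by ring
          _ ≤ c0 * Gbar u * (1 + ε₀) ^ (n + 1) :=
              mul_le_mul_of_nonneg_left hpow (mul_nonneg hc0pos.le (hGnn u))
          _ = c0 * (1 + ε₀) ^ (n + 1) * Gbar u := by ring
      · have hu0 : (0:ℝ) ≤ u := le_trans hA0 hu.le
        rw [hTrec n u]
        have step : convOn g (T n) u ≤ (c0 * (1 + ε₀) ^ n) * convOn g Gbar u := by
          rw [convOn, convOn, ← intervalIntegral.integral_const_mul]
          apply intervalIntegral.integral_mono_on hu0 (hITn n u 0 u)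
            (((hbdd_int Gbar hGmeas hGnn hGle1 u).const_mul _).intervalIntegrable)
          intro x _
          have hih := ih (u - x)
          calc g x * T n (u - x) ≤ g x * (c0 * (1 + ε₀) ^ n * Gbar (u - x)) :=
                mul_le_mul_of_nonneg_left hih (hnn x)
            _ = c0 * (1 + ε₀) ^ n * (g x * Gbar (u - x)) := by ring
        calc convOn g (T n) u ≤ (c0 * (1 + ε₀) ^ n) * convOn g Gbar u := step
          _ ≤ (c0 * (1 + ε₀) ^ n) * ((1 + ε₀) * Gbar u) := by
              apply mul_le_mul_of_nonneg_left (hconv_le u hu.le)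
              positivity
          _ = c0 * (1 + ε₀) ^ (n + 1) * Gbar u := by ring
  -- the limit for each T n
  have LIM : ∀ n, Tendsto (fun u => T n u / Gbar u) atTop (𝓝 1) := by
    intro n
    induction n with
    | zero => exact L0.congr fun u => by rw [hT0 u]
    | succ n ih =>
      rw [Metric.tendsto_nhds]
      intro ε hε
      set δ : ℝ := min (ε / 5) 1 with hδdef
      have hδpos : 0 < δ := lt_min (by linarith) one_pos
      have hδ1 : δ ≤ 1 := min_le_right _ _
      have hδε : δ ≤ ε / 5 := min_le_left _ _
      obtain ⟨A₂, hA₂⟩ := eventually_atTop.1 ((Metric.tendsto_nhds.1 ih) δ hδpos)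
      set B : ℝ := max A₂ 0 with hBdef
      have hB0 : (0:ℝ) ≤ B := le_max_right _ _
      have hIH : ∀ x, B ≤ x → (1 - δ) * Gbar x ≤ T n x ∧ T n x ≤ (1 + δ) * Gbar x := by
        intro x hx
        have h1 := hA₂ x (le_trans (le_max_left _ _) hx)
        rw [Real.dist_eq, abs_lt] at h1
        have hpos := hGpos x
        constructor
        · have := (lt_div_iff₀ hpos).1 (by linarith [h1.1] : 1 - δ < T n x / Gbar x)
          linarith
        · have := (div_lt_iff₀ hpos).1 (by linarith [h1.2] : T n x / Gbar x < 1 + δ)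
          linarith
      have ev1 : ∀ᶠ u in atTop, |convOn g Gbar u / Gbar u - 1| < δ := by
        have := Metric.tendsto_nhds.1 L0 δ hδpos
        simpa [Real.dist_eq] using this
      have ev2 : ∀ᶠ u in atTop, |(Gbar (u - B) - Gbar u) / Gbar u| < δ := by
        refine (Metric.tendsto_nhds.1 (LTd B hB0) δ hδpos).mono fun u hu => ?_
        rwa [Real.dist_eq, sub_zero] at hu
      filter_upwards [ev1, ev2, eventually_ge_atTop B] with u h1 h2 huB
      rw [Real.dist_eq]
      have hu0 : (0:ℝ) ≤ u := le_trans hB0 huB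
      have hGu := hGpos u
      rw [abs_lt] at h1 h2
      have hc1 : convOn g Gbar u ≤ (1 + δ) * Gbar u := by
        have := (div_lt_iff₀ hGu).1 (by linarith [h1.2] : convOn g Gbar u / Gbar u < 1 + δ)
        linarith
      have hc2 : (1 - δ) * Gbar u ≤ convOn g Gbar u := by
        have := (lt_div_iff₀ hGu).1 (by linarith [h1.1] : 1 - δ < convOn g Gbar u / Gbar u)
        linarith
      have hd : Gbar (u - B) - Gbar u ≤ δ * Gbar u := by
        have := (div_lt_iff₀ hGu).1 (h2.2)
        linarith
      -- decomposition
      have hdecomp : convOn g (T n) u = (∫ y in (0:ℝ)..(u - B), g y * T n (u - y))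
          + ∫ y in (u - B)..u, g y * T n (u - y) := by
        rw [convOn]
        exact (intervalIntegral.integral_add_adjacent_intervals
          (hITn n u 0 (u - B)) (hITn n u (u - B) u)).symm
      have hgG_decomp : convOn g Gbar u = (∫ y in (0:ℝ)..(u - B), g y * Gbar (u - y))
          + ∫ y in (u - B)..u, g y * Gbar (u - y) := by
        rw [convOn]
        exact (intervalIntegral.integral_add_adjacent_intervals
          (hIGbar u 0 (u - B)) (hIGbar u (u - B) u)).symm
      have huB0 : (0:ℝ) ≤ u - B := by linarith
      -- upper bounds
      have hS1le : ∫ y in (0:ℝ)..(u - B), g y * T n (u - y)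
          ≤ (1 + δ) * ∫ y in (0:ℝ)..(u - B), g y * Gbar (u - y) := by
        rw [← intervalIntegral.integral_const_mul]
        apply intervalIntegral.integral_mono_on huB0 (hITn n u 0 (u - B))
          (((hbdd_int Gbar hGmeas hGnn hGle1 u).const_mul _).intervalIntegrable)
        intro y hy
        have := (hIH (u - y) (by linarith [hy.2])).2
        calc g y * T n (u - y) ≤ g y * ((1 + δ) * Gbar (u - y)) :=
              mul_le_mul_of_nonneg_left this (hnn y)
          _ = (1 + δ) * (g y * Gbar (u - y)) := by ring
      have hS2le : ∫ y in (u - B)..u, g y * T n (u - y) ≤ Gbar (u - B) - Gbar u := by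
        calc ∫ y in (u - B)..u, g y * T n (u - y) ≤ ∫ y in (u - B)..u, g y := by
              apply intervalIntegral.integral_mono_on (by linarith) (hITn n u (u - B) u)
                hgInt.intervalIntegrable
              intro y _
              exact mul_le_of_le_one_right (hnn y) (hT1 n _)
          _ = Gbar (u - B) - Gbar u := hGint_ab (u - B) u (by linarith)
      have hS2Gle : ∫ y in (u - B)..u, g y * Gbar (u - y) ≤ Gbar (u - B) - Gbar u := by
        calc ∫ y in (u - B)..u, g y * Gbar (u - y) ≤ ∫ y in (u - B)..u, g y := by
              apply intervalIntegral.integral_mono_on (by linarith) (hIGbar u (u - B) u)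
                hgInt.intervalIntegrable
              intro y _
              exact mul_le_of_le_one_right (hnn y) (hGle1 _)
          _ = Gbar (u - B) - Gbar u := hGint_ab (u - B) u (by linarith)
      have hS2ge : 0 ≤ ∫ y in (u - B)..u, g y * T n (u - y) :=
        intervalIntegral.integral_nonneg (by linarith)
          (fun y _ => mul_nonneg (hnn y) ((KT n).nonneg _))
      have hS2Gge : 0 ≤ ∫ y in (u - B)..u, g y * Gbar (u - y) :=
        intervalIntegral.integral_nonneg (by linarith)
          (fun y _ => mul_nonneg (hnn y) (hGnn _))
      have hS1ge : (1 - δ) * ∫ y in (0:ℝ)..(u - B), g y * Gbar (u - y)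
          ≤ ∫ y in (0:ℝ)..(u - B), g y * T n (u - y) := by
        rw [← intervalIntegral.integral_const_mul]
        apply intervalIntegral.integral_mono_on huB0
          (((hbdd_int Gbar hGmeas hGnn hGle1 u).const_mul _).intervalIntegrable)
          (hITn n u 0 (u - B))
        intro y hy
        have := (hIH (u - y) (by linarith [hy.2])).1
        calc (1 - δ) * (g y * Gbar (u - y)) = g y * ((1 - δ) * Gbar (u - y)) := by ring
          _ ≤ g y * T n (u - y) := mul_le_mul_of_nonneg_left this (hnn y)
      -- combine
      have hup : T (n + 1) u ≤ ((1 + δ) * (1 + δ) + δ) * Gbar u := by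
        rw [hTrec n u, hdecomp]
        have e1 : ∫ y in (0:ℝ)..(u - B), g y * Gbar (u - y) ≤ convOn g Gbar u := by
          rw [hgG_decomp]; linarith
        have m1 : (1 + δ) * ∫ y in (0:ℝ)..(u - B), g y * Gbar (u - y)
            ≤ (1 + δ) * convOn g Gbar u := mul_le_mul_of_nonneg_left e1 (by linarith)
        have m2 : (1 + δ) * convOn g Gbar u ≤ (1 + δ) * ((1 + δ) * Gbar u) :=
          mul_le_mul_of_nonneg_left hc1 (by linarith)
        have e2 : (1 + δ) * ((1 + δ) * Gbar u) = (1 + δ) * (1 + δ) * Gbar u := by ring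
        have e3 : ((1 + δ) * (1 + δ) + δ) * Gbar u
            = (1 + δ) * (1 + δ) * Gbar u + δ * Gbar u := by ring
        linarith [hS1le, hS2le]
      have hlo : ((1 - δ) * (1 - 2 * δ)) * Gbar u ≤ T (n + 1) u := by
        rw [hTrec n u, hdecomp]
        have e1 : convOn g Gbar u - (Gbar (u - B) - Gbar u)
            ≤ ∫ y in (0:ℝ)..(u - B), g y * Gbar (u - y) := by
          rw [hgG_decomp]; linarith
        have m1 : (1 - δ) * (convOn g Gbar u - (Gbar (u - B) - Gbar u))
            ≤ (1 - δ) * ∫ y in (0:ℝ)..(u - B), g y * Gbar (u - y) :=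
          mul_le_mul_of_nonneg_left e1 (by linarith)
        have m2 : (1 - δ) * ((1 - 2 * δ) * Gbar u)
            ≤ (1 - δ) * (convOn g Gbar u - (Gbar (u - B) - Gbar u)) :=
          mul_le_mul_of_nonneg_left (by linarith) (by linarith)
        have e2 : (1 - δ) * ((1 - 2 * δ) * Gbar u) = (1 - δ) * (1 - 2 * δ) * Gbar u := by ring
        linarith [hS1ge, hS2ge]
      have hr1 : T (n + 1) u / Gbar u ≤ (1 + δ) * (1 + δ) + δ := (div_le_iff₀ hGu).2 hup
      have hr2 : (1 - δ) * (1 - 2 * δ) ≤ T (n + 1) u / Gbar u := (le_div_iff₀ hGu).2 hlo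
      have hδδ : δ * δ ≤ δ := mul_le_of_le_one_right hδpos.le hδ1
      have hδδ0 : 0 ≤ δ * δ := mul_nonneg hδpos.le hδpos.le
      have hexp1 : (1 + δ) * (1 + δ) + δ = 1 + 3 * δ + δ * δ := by ring
      have hexp2 : (1 - δ) * (1 - 2 * δ) = 1 - 3 * δ + 2 * (δ * δ) := by ring
      rw [abs_lt]
      constructor <;> linarith
  -- assembling the series
  have hpε : p * (1 + ε₀) = (1 + p) / 2 := by
    rw [hε₀def]
    field_simp
    ring
  have hsum_target : Tendsto (fun u => ∑' n : ℕ, p ^ (n + 2) * T n u / Gbar u)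
      atTop (𝓝 (p ^ 2 / (1 - p))) := by
    have hbound : Summable (fun n : ℕ => c0 * p ^ 2 * ((1 + p) / 2) ^ n) :=
      (summable_geometric_of_lt_one (by linarith) (by linarith)).mul_left _
    have hterm : ∀ n : ℕ, Tendsto (fun u => p ^ (n + 2) * T n u / Gbar u)
        atTop (𝓝 (p ^ (n + 2))) := by
      intro n
      have h1 := (LIM n).const_mul (p ^ (n + 2))
      rw [mul_one] at h1
      exact h1.congr fun u => (mul_div_assoc _ _ _).symm
    have hdom : ∀ᶠ u in atTop, ∀ n : ℕ,
        ‖p ^ (n + 2) * T n u / Gbar u‖ ≤ c0 * p ^ 2 * ((1 + p) / 2) ^ n := by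
      refine Eventually.of_forall fun u n => ?_
      have hGu := hGpos u
      rw [Real.norm_eq_abs, abs_of_nonneg (div_nonneg
        (mul_nonneg (by positivity) ((KT n).nonneg u)) hGu.le)]
      have h2 : p ^ (n + 2) * T n u / Gbar u ≤ p ^ (n + 2) * (c0 * (1 + ε₀) ^ n) := by
        rw [div_le_iff₀ hGu]
        calc p ^ (n + 2) * T n u ≤ p ^ (n + 2) * (c0 * (1 + ε₀) ^ n * Gbar u) :=
              mul_le_mul_of_nonneg_left (Kesten n u) (by positivity)
          _ = p ^ (n + 2) * (c0 * (1 + ε₀) ^ n) * Gbar u := by ring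
      have h3 : p ^ (n + 2) * (c0 * (1 + ε₀) ^ n) = c0 * p ^ 2 * ((1 + p) / 2) ^ n := by
        rw [← hpε, mul_pow]
        ring
      linarith [h2, h3.le]
    have hmain := tendsto_tsum_of_dominated_convergence hbound hterm hdom
    have hval : (∑' n : ℕ, p ^ (n + 2)) = p ^ 2 / (1 - p) := by
      have e : ∀ n : ℕ, p ^ (n + 2) = p ^ 2 * p ^ n := fun n => by ring
      rw [tsum_congr e, tsum_mul_left, tsum_geometric_of_lt_one hp0.le hp1, div_eq_mul_inv]
    rwa [hval] at hmain
  have hfinal : Tendsto (fun u => p + ∑' n : ℕ, p ^ (n + 2) * T n u / Gbar u)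
      atTop (𝓝 (p + p ^ 2 / (1 - p))) := tendsto_const_nhds.add hsum_target
  have heq : ∀ u, F u / Gbar u = p + ∑' n : ℕ, p ^ (n + 2) * T n u / Gbar u := by
    intro u
    rw [hF u]
    have h1 : (∑' n : ℕ, p ^ (n + 2) * convOn Gbar (iterConv g n) u)
        = ∑' n : ℕ, p ^ (n + 2) * T n u := tsum_congr fun n => by rw [hTeq n u]
    rw [h1, add_div, mul_div_assoc, div_self (hGpos u).ne', mul_one]
    congr 1
    exact tsum_div_const.symm
  have hval2 : p + p ^ 2 / (1 - p) = p / (1 - p) := by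
    have h1p : (1:ℝ) - p ≠ 0 := by linarith
    field_simp
    ring
  have := hfinal.congr fun u => (heq u).symm
  rwa [hval2] at this
end

section
/- Asymptotic constant for exponentially tilted integrals: let ξ > 0, θ > 0, c > 0, β > 0. Then as u → ∞, ∫_u^∞ e^{-β(y-u)} · ξ θ^ξ y^{c-1} c/(θ + y^c)^{1+ξ} dy ~ (1/β) · ξ θ^ξ u^{c-1} c/(θ + u^c)^{1+ξ}, and consequently lim_{u→∞} [∫_u^∞ e^{β x} ∫_x^∞ e^{-β y} h(y) dy dx] / (θ/(θ+u^c))^ξ = 1/β, where h(y) = ξ θ^ξ c y^{c-1}/(θ + y^c)^{1+ξ} is the Burr(ξ,θ,c) density. -/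
open MeasureTheory Real
open Topology Filter

lemma hasDerivAt_tail_integral {f : ℝ → ℝ} {a : ℝ}
    (hint : IntegrableOn f (Set.Ioi a)) (hcont : ContinuousOn f (Set.Ioi a))
    {x : ℝ} (hx : a < x) :
    HasDerivAt (fun u => ∫ y in Set.Ioi u, f y) (-f x) x := by
  have key : ∀ u, a < u → (∫ y in Set.Ioi u, f y)
      = (∫ y in Set.Ioi a, f y) - ∫ y in a..u, f y := by
    intro u hu
    have hsplit : Set.Ioc a u ∪ Set.Ioi u = Set.Ioi a := Set.Ioc_union_Ioi_eq_Ioi hu.le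
    have h1 : IntegrableOn f (Set.Ioc a u) :=
      hint.mono_set (by rw [← hsplit]; exact Set.subset_union_left)
    have h2 : IntegrableOn f (Set.Ioi u) :=
      hint.mono_set (by rw [← hsplit]; exact Set.subset_union_right)
    rw [intervalIntegral.integral_of_le hu.le]
    have h3 := MeasureTheory.setIntegral_union (Set.Ioc_disjoint_Ioi le_rfl)
      measurableSet_Ioi h1 h2
    rw [hsplit] at h3
    rw [h3]; ring
  have hmeas : StronglyMeasurableAtFilter f (𝓝 x) :=
    ⟨Set.Ioi a, isOpen_Ioi.mem_nhds hx, hcont.aestronglyMeasurable measurableSet_Ioi⟩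
  have hci : ContinuousAt f x := hcont.continuousAt (isOpen_Ioi.mem_nhds hx)
  have hii : IntervalIntegrable f volume a x := by
    rw [intervalIntegrable_iff_integrableOn_Ioc_of_le hx.le]
    exact hint.mono_set Set.Ioc_subset_Ioi_self
  have hd : HasDerivAt (fun u => ∫ y in a..u, f y) (f x) x :=
    intervalIntegral.integral_hasDerivAt_right hii hmeas hci
  have hd2 := hd.const_sub (∫ y in Set.Ioi a, f y)
  exact hd2.congr_of_eventuallyEq
    (by filter_upwards [isOpen_Ioi.mem_nhds hx] with u hu using key u hu)

/-- Asymptotics of exponentially tilted integrals of the Burr density. -/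
theorem burr_tilted_asymptotics (ξ θ c β : ℝ) (hξ : 0 < ξ) (hθ : 0 < θ)
    (hc : 0 < c) (hβ : 0 < β)
    (h : ℝ → ℝ) (hdef : ∀ y, h y = ξ * θ ^ ξ * c * y ^ (c - 1) / (θ + y ^ c) ^ (1 + ξ)) :
    Filter.Tendsto
      (fun u => (∫ y in Set.Ioi u, Real.exp (-β * (y - u)) * h y) / ((1 / β) * h u))
      Filter.atTop (nhds 1)
    ∧ Filter.Tendsto
      (fun u => (∫ x in Set.Ioi u,
          Real.exp (β * x) * ∫ y in Set.Ioi x, Real.exp (-β * y) * h y)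
        / (θ / (θ + u ^ c)) ^ ξ)
      Filter.atTop (nhds (1 / β)) := by
  have hβ' : β ≠ 0 := hβ.ne'
  set C : ℝ := ξ * θ ^ ξ * c with hC
  have hCpos : 0 < C := by
    have : (0:ℝ) < θ ^ ξ := rpow_pos_of_pos hθ ξ
    positivity
  -- positivity of θ + u^c
  have hPpos : ∀ u : ℝ, 0 < u → 0 < θ + u ^ c := fun u hu => add_pos hθ (rpow_pos_of_pos hu c)
  -- positivity of h
  have hhpos : ∀ u : ℝ, 0 < u → 0 < h u := by
    intro u hu
    rw [hdef u]
    have h1 : (0:ℝ) < u ^ (c-1) := rpow_pos_of_pos hu _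
    have h2 : (0:ℝ) < (θ + u ^ c) ^ (1+ξ) := rpow_pos_of_pos (hPpos u hu) _
    have : (0:ℝ) < θ ^ ξ := rpow_pos_of_pos hθ ξ
    positivity
  -- continuity of h
  have hconth : ContinuousOn h (Set.Ioi 0) := by
    intro y hy
    have hy0 : (0:ℝ) < y := hy
    have h1 : ContinuousAt (fun y : ℝ => ξ * θ ^ ξ * c * y ^ (c-1)) y :=
      (Real.continuousAt_rpow_const y _ (Or.inl hy0.ne')).const_mul _
    have h2 : ContinuousAt (fun y : ℝ => (θ + y ^ c) ^ (1+ξ)) y := by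
      apply ContinuousAt.rpow_const
      · exact (continuousAt_const.add (Real.continuousAt_rpow_const y _ (Or.inl hy0.ne')))
      · exact Or.inl (hPpos y hy0).ne'
    have h3 := h1.div h2 (rpow_pos_of_pos (hPpos y hy0) _).ne'
    have h4 : ContinuousAt h y := by
      apply h3.congr
      filter_upwards [] with z using (hdef z).symm
    exact h4.continuousWithinAt
  -- derivative of h
  set r : ℝ → ℝ := fun u => (c - 1) / u - (1 + ξ) * c * u ^ (c - 1) / (θ + u ^ c) with hrdef
  have hderivh : ∀ u : ℝ, 0 < u → HasDerivAt h (h u * r u) u := by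
    intro u hu
    have hPu : 0 < θ + u ^ c := hPpos u hu
    have h1 : HasDerivAt (fun y : ℝ => ξ * θ ^ ξ * c * y ^ (c - 1))
        (ξ * θ ^ ξ * c * ((c - 1) * u ^ (c - 1 - 1))) u :=
      (Real.hasDerivAt_rpow_const (Or.inl hu.ne')).const_mul _
    have h2 : HasDerivAt (fun y : ℝ => θ + y ^ c) (c * u ^ (c - 1)) u := by
      simpa using (Real.hasDerivAt_rpow_const (p := c) (Or.inl hu.ne')).const_add θ
    have h3 : HasDerivAt (fun y : ℝ => (θ + y ^ c) ^ (1 + ξ))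
        ((1 + ξ) * (θ + u ^ c) ^ (1 + ξ - 1) * (c * u ^ (c - 1))) u := by
      have := (Real.hasDerivAt_rpow_const (x := θ + u ^ c) (p := 1 + ξ)
        (Or.inl hPu.ne')).comp u h2
      simpa [Function.comp_def, mul_assoc] using this
    have h4 := h1.div h3 (rpow_pos_of_pos hPu _).ne'
    have h5 : HasDerivAt h
        ((ξ * θ ^ ξ * c * ((c - 1) * u ^ (c - 1 - 1)) * (θ + u ^ c) ^ (1 + ξ) -
          ξ * θ ^ ξ * c * u ^ (c - 1) *
            ((1 + ξ) * (θ + u ^ c) ^ (1 + ξ - 1) * (c * u ^ (c - 1)))) /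
          ((θ + u ^ c) ^ (1 + ξ)) ^ 2) u := by
      apply h4.congr_of_eventuallyEq
      filter_upwards [] with z using (hdef z)
    convert h5 using 1
    -- algebraic identity
    have e1 : u ^ (c - 1 - 1) = u ^ (c-1) / u := by
      rw [Real.rpow_sub hu, Real.rpow_one]
    have e2 : (θ + u ^ c) ^ (1 + ξ - 1) = (θ + u ^ c) ^ ξ := by norm_num
    have e3 : (θ + u ^ c) ^ (1 + ξ) = (θ + u ^ c) * (θ + u ^ c) ^ ξ := by
      rw [Real.rpow_add hPu, Real.rpow_one]
    rw [hdef u, e1, e2, e3, hrdef]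
    have hA : (0:ℝ) < u ^ (c-1) := rpow_pos_of_pos hu _
    have hQ : (0:ℝ) < (θ + u ^ c) ^ ξ := rpow_pos_of_pos hPu _
    field_simp
    ring
  -- Fb and its properties
  set Fb : ℝ → ℝ := fun u => θ ^ ξ * (θ + u ^ c) ^ (-ξ) with hFbdef
  have hFbpos : ∀ u : ℝ, 0 < u → 0 < Fb u := fun u hu => by
    have := rpow_pos_of_pos hθ ξ
    have := rpow_pos_of_pos (hPpos u hu) (-ξ)
    positivity
  have hFbderiv : ∀ u : ℝ, 0 < u → HasDerivAt Fb (-(h u)) u := by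
    intro u hu
    have hPu : 0 < θ + u ^ c := hPpos u hu
    have h2 : HasDerivAt (fun y : ℝ => θ + y ^ c) (c * u ^ (c - 1)) u := by
      simpa using (Real.hasDerivAt_rpow_const (p := c) (Or.inl hu.ne')).const_add θ
    have h3 : HasDerivAt (fun y : ℝ => (θ + y ^ c) ^ (-ξ))
        (-ξ * (θ + u ^ c) ^ (-ξ - 1) * (c * u ^ (c - 1))) u := by
      have := (Real.hasDerivAt_rpow_const (x := θ + u ^ c) (p := -ξ)
        (Or.inl hPu.ne')).comp u h2
      simpa [Function.comp_def, mul_assoc] using this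
    have h4 := h3.const_mul (θ ^ ξ)
    refine h4.congr_deriv ?_; symm
    have e1 : (θ + u ^ c) ^ (-ξ - 1) = ((θ + u ^ c) ^ (1 + ξ))⁻¹ := by
      rw [show -ξ - 1 = -(1 + ξ) by ring, Real.rpow_neg hPu.le]
    rw [hdef u, e1]
    have hQ : (0:ℝ) < (θ + u ^ c) ^ (1 + ξ) := rpow_pos_of_pos hPu _
    field_simp
    rw [hC]; ring
  have hPtop : Tendsto (fun u : ℝ => θ + u ^ c) atTop atTop :=
    tendsto_atTop_add_const_left _ θ (tendsto_rpow_atTop hc)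
  have hFbtop : Tendsto Fb atTop (𝓝 0) := by
    have h1 := (tendsto_rpow_neg_atTop hξ).comp hPtop
    have h2 := h1.const_mul (θ ^ ξ)
    simpa using h2
  -- tail integral of h
  have htail : ∀ u : ℝ, 1 ≤ u →
      IntegrableOn h (Set.Ioi u) ∧ (∫ y in Set.Ioi u, h y) = Fb u := by
    intro u hu
    have h0u : (0:ℝ) < u := lt_of_lt_of_le one_pos hu
    have hcontg : ContinuousWithinAt (fun v => -Fb v) (Set.Ici u) u :=
      ((hFbderiv u h0u).neg.continuousAt).continuousWithinAt
    have hder : ∀ x ∈ Set.Ioi u, HasDerivAt (fun v => -Fb v) (h x) x := fun x hx => by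
      have := (hFbderiv x (h0u.trans hx)).neg; rw [neg_neg] at this; exact this
    have hpos' : ∀ x ∈ Set.Ioi u, 0 ≤ h x := fun x hx => (hhpos x (h0u.trans hx)).le
    have htd : Tendsto (fun v => -Fb v) atTop (𝓝 0) := by
      simpa using hFbtop.neg
    refine ⟨integrableOn_Ioi_deriv_of_nonneg hcontg hder hpos' htd, ?_⟩
    rw [integral_Ioi_of_hasDerivAt_of_nonneg hcontg hder hpos' htd]
    ring
  -- f and G
  set f : ℝ → ℝ := fun y => Real.exp (-β * y) * h y with hfdef
  have hcontf : ContinuousOn f (Set.Ioi 0) :=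
    ((Real.continuous_exp.comp (continuous_const.mul continuous_id)).continuousOn).mul hconth
  have hfnonneg : ∀ y : ℝ, 0 < y → 0 ≤ f y := fun y hy =>
    mul_nonneg (Real.exp_nonneg _) (hhpos y hy).le
  have hfleh : ∀ y : ℝ, 0 < y → f y ≤ h y := by
    intro y hy
    have h1 : Real.exp (-β * y) ≤ 1 := Real.exp_le_one_iff.2 (by nlinarith)
    calc f y ≤ 1 * h y := mul_le_mul_of_nonneg_right h1 (hhpos y hy).le
      _ = h y := one_mul _
  have hfint : ∀ u : ℝ, 1 ≤ u → IntegrableOn f (Set.Ioi u) := by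
    intro u hu
    have h0u : (0:ℝ) < u := lt_of_lt_of_le one_pos hu
    apply Integrable.mono' (htail u hu).1
    · exact (hcontf.mono (Set.Ioi_subset_Ioi h0u.le)).aestronglyMeasurable measurableSet_Ioi
    · filter_upwards [ae_restrict_mem measurableSet_Ioi] with y hy
      have hy0 : (0:ℝ) < y := h0u.trans hy
      rw [Real.norm_eq_abs, abs_of_nonneg (hfnonneg y hy0)]
      exact hfleh y hy0
  set G : ℝ → ℝ := fun u => ∫ y in Set.Ioi u, f y with hGdef
  have hGnonneg : ∀ u : ℝ, 1 ≤ u → 0 ≤ G u := by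
    intro u hu
    apply setIntegral_nonneg measurableSet_Ioi
    intro y hy
    exact hfnonneg y ((lt_of_lt_of_le one_pos hu).trans hy)
  have hGle : ∀ u : ℝ, 1 ≤ u → G u ≤ Fb u := by
    intro u hu
    rw [← (htail u hu).2]
    apply setIntegral_mono_on (hfint u hu) (htail u hu).1 measurableSet_Ioi
    intro y hy
    exact hfleh y ((lt_of_lt_of_le one_pos hu).trans hy)
  have hGtop : Tendsto G atTop (𝓝 0) :=
    squeeze_zero' (eventually_atTop.2 ⟨1, hGnonneg⟩) (eventually_atTop.2 ⟨1, hGle⟩) hFbtop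
  have hGderiv : ∀ x : ℝ, 1 < x → HasDerivAt G (-f x) x := fun x hx =>
    hasDerivAt_tail_integral (hfint 1 le_rfl)
      (hcontf.mono (Set.Ioi_subset_Ioi zero_le_one)) hx
  -- upper bound for h, and h → 0
  have hhub : ∀ u : ℝ, 1 ≤ u → h u ≤ C * (θ ^ ξ)⁻¹ * u⁻¹ := by
    intro u hu
    have h0u : (0:ℝ) < u := lt_of_lt_of_le one_pos hu
    have hPu : 0 < θ + u ^ c := hPpos u h0u
    have hA : (0:ℝ) < u ^ (c-1) := rpow_pos_of_pos h0u _
    have huc : (0:ℝ) < u ^ c := rpow_pos_of_pos h0u _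
    have hAu : u ^ (c-1) * u = u ^ c := by
      have h5 : u ^ (c - 1 + 1) = u ^ (c-1) * u := Real.rpow_add_one h0u.ne' _
      rw [show c - 1 + 1 = c by ring] at h5
      exact h5.symm
    have hθξ : (0:ℝ) < θ ^ ξ := rpow_pos_of_pos hθ _
    have hBQ : u ^ c * θ ^ ξ ≤ (θ + u ^ c) ^ (1 + ξ) := by
      rw [Real.rpow_add hPu, Real.rpow_one]
      exact mul_le_mul (by linarith) (Real.rpow_le_rpow hθ.le (by linarith) hξ.le) hθξ.le hPu.le
    rw [hdef u]
    have step1 : C * u ^ (c-1) / (θ + u ^ c) ^ (1+ξ) ≤ C * u ^ (c-1) / (u ^ c * θ ^ ξ) := by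
      gcongr
    apply step1.trans
    rw [← hAu]
    apply le_of_eq
    field_simp
  have hh0 : Tendsto h atTop (𝓝 0) := by
    apply squeeze_zero'
      (eventually_atTop.2 ⟨1, fun u hu => (hhpos u (lt_of_lt_of_le one_pos hu)).le⟩)
      (eventually_atTop.2 ⟨1, hhub⟩)
    simpa using tendsto_inv_atTop_zero.const_mul (C * (θ ^ ξ)⁻¹)
  -- g and its derivative
  set g : ℝ → ℝ := fun u => 1 / β * (Real.exp (-β * u) * h u) with hgdef
  have hexp0 : Tendsto (fun u : ℝ => Real.exp (-β * u)) atTop (𝓝 0) := by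
    have h1 : Tendsto (fun u : ℝ => β * u) atTop atTop :=
      Tendsto.const_mul_atTop hβ tendsto_id
    have h2 := Real.tendsto_exp_neg_atTop_nhds_zero.comp h1
    have h3 : (fun u : ℝ => Real.exp (-β * u)) = (fun x => Real.exp (-x)) ∘ fun u : ℝ => β * u := by
      funext u; simp [neg_mul]
    rw [h3]; exact h2
  have hgtop : Tendsto g atTop (𝓝 0) := by
    have h2 := (hexp0.mul hh0).const_mul (1 / β)
    rw [mul_zero, mul_zero] at h2
    exact h2
  set g' : ℝ → ℝ := fun u => Real.exp (-β * u) * h u * (r u / β - 1) with hg'def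
  have hgderiv : ∀ u : ℝ, 0 < u → HasDerivAt g (g' u) u := by
    intro u hu
    have he : HasDerivAt (fun v : ℝ => Real.exp (-β * v)) (Real.exp (-β * u) * (-β * 1)) u :=
      ((hasDerivAt_id u).const_mul (-β)).exp
    have h1 := (he.mul (hderivh u hu)).const_mul (1 / β)
    refine h1.congr_deriv ?_; symm
    show Real.exp (-β * u) * h u * (r u / β - 1)
      = 1 / β * (Real.exp (-β * u) * (-β * 1) * h u + Real.exp (-β * u) * (h u * r u))
    field_simp
    ring
  -- limits of r
  have hθP0 : Tendsto (fun u : ℝ => θ / (θ + u ^ c)) atTop (𝓝 0) := by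
    have h1 := hPtop.inv_tendsto_atTop
    have h2 := h1.const_mul θ
    rw [mul_zero] at h2
    simpa [div_eq_mul_inv] using h2
  have hs : Tendsto (fun u : ℝ => (c - 1) - (1 + ξ) * c * (1 - θ / (θ + u ^ c))) atTop
      (𝓝 ((c - 1) - (1 + ξ) * c * (1 - 0))) :=
    tendsto_const_nhds.sub ((tendsto_const_nhds.sub hθP0).const_mul _)
  have hsr : ∀ u : ℝ, 0 < u →
      (c - 1) - (1 + ξ) * c * (1 - θ / (θ + u ^ c)) = u * r u := by
    intro u hu
    have hPu : 0 < θ + u ^ c := hPpos u hu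
    have hAu : u ^ (c-1) * u = u ^ c := by
      have h5 : u ^ (c - 1 + 1) = u ^ (c-1) * u := Real.rpow_add_one hu.ne' _
      rw [show c - 1 + 1 = c by ring] at h5
      exact h5.symm
    have hPu' : θ + u ^ (c-1) * u ≠ 0 := by rw [hAu]; exact hPu.ne'
    rw [hrdef]
    show (c - 1) - (1 + ξ) * c * (1 - θ / (θ + u ^ c))
      = u * ((c - 1) / u - (1 + ξ) * c * u ^ (c - 1) / (θ + u ^ c))
    rw [← hAu]
    field_simp
    ring
  have hrneg : ∀ᶠ u : ℝ in atTop, r u < 0 := by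
    have hlt : (c - 1) - (1 + ξ) * c * (1 - 0) < 0 := by nlinarith
    filter_upwards [hs.eventually (gt_mem_nhds hlt), eventually_ge_atTop (1:ℝ)] with u h1 h2
    have h0u : (0:ℝ) < u := lt_of_lt_of_le one_pos h2
    rw [hsr u h0u] at h1
    nlinarith
  have hr0 : Tendsto r atTop (𝓝 0) := by
    have h1 := hs.mul tendsto_inv_atTop_zero
    rw [mul_zero] at h1
    apply h1.congr'
    filter_upwards [eventually_ge_atTop (1:ℝ)] with u hu
    have h0u : (0:ℝ) < u := lt_of_lt_of_le one_pos hu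
    rw [hsr u h0u, mul_comm u (r u), mul_assoc, mul_inv_cancel₀ h0u.ne', mul_one]
  -- L'Hopital for part 1
  have hdiv1 : Tendsto (fun u => -f u / g' u) atTop (𝓝 1) := by
    have hlim : Tendsto (fun u : ℝ => 1 / (1 - r u / β)) atTop (𝓝 (1 / (1 - 0 / β))) := by
      apply tendsto_const_nhds.div (tendsto_const_nhds.sub (hr0.div_const β))
      norm_num
    rw [show (1:ℝ) / (1 - 0 / β) = 1 by norm_num] at hlim
    apply hlim.congr'
    filter_upwards [eventually_ge_atTop (1:ℝ), hr0.eventually (gt_mem_nhds hβ)] with u hu hrβ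
    have h0u : (0:ℝ) < u := lt_of_lt_of_le one_pos hu
    have hEpos := Real.exp_pos (-β * u)
    have hhu := hhpos u h0u
    have hne : 1 - r u / β ≠ 0 := by
      have : r u / β < 1 := (div_lt_one hβ).2 hrβ
      linarith
    show 1 / (1 - r u / β)
      = -(Real.exp (-β * u) * h u) / (Real.exp (-β * u) * h u * (r u / β - 1))
    have hne2 : r u / β - 1 ≠ 0 := by
      intro hx; apply hne; linarith [sub_eq_zero.1 hx]
    have hEH : 0 < Real.exp (-β * u) * h u := mul_pos hEpos hhu
    rw [show -(Real.exp (-β * u) * h u) = Real.exp (-β * u) * h u * (-1) by ring,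
        mul_div_mul_left _ _ hEH.ne']
    rw [div_eq_div_iff hne hne2]
    ring
  have part1 : Tendsto (fun u => G u / g u) atTop (𝓝 1) := by
    apply HasDerivAt.lhopital_zero_atTop
      (eventually_atTop.2 ⟨2, fun u hu => hGderiv u (by linarith)⟩)
      (eventually_atTop.2 ⟨1, fun u hu => hgderiv u (lt_of_lt_of_le one_pos hu)⟩)
      ?_ hGtop hgtop hdiv1
    filter_upwards [eventually_ge_atTop (1:ℝ), hr0.eventually (gt_mem_nhds hβ)] with u hu hrβ
    have h0u : (0:ℝ) < u := lt_of_lt_of_le one_pos hu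
    have hEH : 0 < Real.exp (-β * u) * h u := mul_pos (Real.exp_pos _) (hhpos u h0u)
    have hlt : r u / β - 1 < 0 := by
      have : r u / β < 1 := (div_lt_one hβ).2 hrβ
      linarith
    exact (mul_neg_of_pos_of_neg hEH hlt).ne
  -- identify part 1 with the statement
  have peq : ∀ u : ℝ, (∫ y in Set.Ioi u, Real.exp (-β * (y - u)) * h y) / (1 / β * h u)
      = G u / g u := by
    intro u
    have hinner : (∫ y in Set.Ioi u, Real.exp (-β * (y - u)) * h y)
        = Real.exp (β * u) * G u := by
      have hpt : ∀ y : ℝ, Real.exp (-β * (y - u)) * h y = Real.exp (β * u) * f y := by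
        intro y
        rw [hfdef]
        show Real.exp (-β * (y - u)) * h y = Real.exp (β * u) * (Real.exp (-β * y) * h y)
        rw [show -β * (y - u) = β * u + -β * y by ring, Real.exp_add]
        ring
      simp_rw [hpt]
      rw [MeasureTheory.integral_const_mul]
    rw [hinner, hgdef]
    show Real.exp (β * u) * G u / (1 / β * h u)
      = G u / (1 / β * (Real.exp (-β * u) * h u))
    rw [show -β * u = -(β * u) by ring, Real.exp_neg]
    rw [show 1 / β * ((Real.exp (β * u))⁻¹ * h u) = (1 / β * h u) / Real.exp (β * u) by ring]
    rw [div_div_eq_mul_div]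
    ring
  -- eventual antitonicity of h
  obtain ⟨a₁, ha₁⟩ := eventually_atTop.1 hrneg
  set a : ℝ := max a₁ 2 with hadef
  have ha2 : (2:ℝ) ≤ a := le_max_right _ _
  have ha1 : (1:ℝ) ≤ a := by linarith
  have ha0 : (0:ℝ) < a := by linarith
  have hrnega : ∀ u : ℝ, a ≤ u → r u < 0 := fun u hu => ha₁ u ((le_max_left _ _).trans hu)
  have hant : AntitoneOn h (Set.Ici a) := by
    apply antitoneOn_of_deriv_nonpos (convex_Ici a)
    · exact hconth.mono (fun x hx => lt_of_lt_of_le ha0 hx)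
    · intro x hx
      rw [interior_Ici] at hx
      exact (hderivh x (ha0.trans hx)).differentiableAt.differentiableWithinAt
    · intro x hx
      rw [interior_Ici] at hx
      rw [(hderivh x (ha0.trans hx)).deriv]
      have h1 := (hhpos x (ha0.trans hx)).le
      have h2 := (hrnega x hx.le).le
      nlinarith
  -- integral of the exponential tail
  have hExpInt : ∀ x : ℝ, (∫ y in Set.Ioi x, Real.exp (-β * y)) = Real.exp (-β * x) / β := by
    intro x
    have hder : ∀ y ∈ Set.Ioi x, HasDerivAt (fun v : ℝ => -(Real.exp (-β * v)) / β)
        (Real.exp (-β * y)) y := by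
      intro y _
      have he : HasDerivAt (fun v : ℝ => Real.exp (-β * v)) (Real.exp (-β * y) * (-β * 1)) y :=
        ((hasDerivAt_id y).const_mul (-β)).exp
      have h2 := (he.neg).div_const β
      refine h2.congr_deriv ?_; symm
      field_simp
    have hcont2 : ContinuousWithinAt (fun v : ℝ => -(Real.exp (-β * v)) / β) (Set.Ici x) x :=
      (((Real.continuous_exp.comp (continuous_const.mul continuous_id)).neg).div_const
        β).continuousWithinAt
    have htd : Tendsto (fun v : ℝ => -(Real.exp (-β * v)) / β) atTop (𝓝 0) := by
      have h3 := (hexp0.neg).div_const β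
      simpa using h3
    rw [integral_Ioi_of_hasDerivAt_of_nonneg hcont2 hder (fun y _ => (Real.exp_pos _).le) htd]
    ring
  -- bound on G via antitonicity
  have hGbound : ∀ x : ℝ, a ≤ x → G x ≤ h x * (Real.exp (-β * x) / β) := by
    intro x hx
    have h0x : (0:ℝ) < x := lt_of_lt_of_le ha0 hx
    have hint2 : IntegrableOn (fun y : ℝ => h x * Real.exp (-β * y)) (Set.Ioi x) :=
      (exp_neg_integrableOn_Ioi x hβ).const_mul _
    have step : G x ≤ ∫ y in Set.Ioi x, h x * Real.exp (-β * y) := by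
      apply setIntegral_mono_on (hfint x (ha1.trans hx)) hint2 measurableSet_Ioi
      intro y hy
      have hyx : x ≤ y := le_of_lt hy
      have hle : h y ≤ h x := hant (Set.mem_Ici.2 hx) (Set.mem_Ici.2 (hx.trans hyx)) hyx
      show Real.exp (-β * y) * h y ≤ h x * Real.exp (-β * y)
      calc Real.exp (-β * y) * h y ≤ Real.exp (-β * y) * h x :=
            mul_le_mul_of_nonneg_left hle (Real.exp_nonneg _)
        _ = h x * Real.exp (-β * y) := mul_comm _ _
    apply step.trans
    rw [MeasureTheory.integral_const_mul, hExpInt x]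
  -- define N and M
  set N : ℝ → ℝ := fun x => Real.exp (β * x) * ∫ y in Set.Ioi x, f y with hNdef
  have hNG : ∀ x : ℝ, N x = Real.exp (β * x) * G x := fun x => rfl
  have hNcont : ContinuousOn N (Set.Ioi 1) := by
    intro x hx
    have hx1 : (1:ℝ) < x := hx
    have hGc : ContinuousAt G x := (hGderiv x hx1).continuousAt
    exact (((Real.continuous_exp.comp
      (continuous_const.mul continuous_id)).continuousAt).mul hGc).continuousWithinAt
  have hNnonneg : ∀ x : ℝ, 1 ≤ x → 0 ≤ N x := fun x hx =>
    mul_nonneg (Real.exp_nonneg _) (hGnonneg x hx)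
  have hNle : ∀ x : ℝ, a ≤ x → N x ≤ 1 / β * h x := by
    intro x hx
    have hNx : N x ≤ Real.exp (β * x) * (h x * (Real.exp (-β * x) / β)) := by
      rw [hNG x]
      exact mul_le_mul_of_nonneg_left (hGbound x hx) (Real.exp_nonneg _)
    apply hNx.trans (le_of_eq ?_)
    rw [show Real.exp (β * x) * (h x * (Real.exp (-β * x) / β))
      = Real.exp (β * x) * Real.exp (-β * x) * (h x / β) by ring, ← Real.exp_add]
    rw [show β * x + -β * x = 0 by ring, Real.exp_zero, one_mul]
    ring
  have hNint : IntegrableOn N (Set.Ioi a) := by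
    apply Integrable.mono' ((htail a ha1).1.const_mul (1 / β))
    · exact (hNcont.mono (Set.Ioi_subset_Ioi (by linarith))).aestronglyMeasurable
        measurableSet_Ioi
    · filter_upwards [ae_restrict_mem measurableSet_Ioi] with x hx
      have hax : a ≤ x := le_of_lt hx
      rw [Real.norm_eq_abs, abs_of_nonneg (hNnonneg x (ha1.trans hax))]
      exact hNle x hax
  set M : ℝ → ℝ := fun u => ∫ x in Set.Ioi u, N x with hMdef
  have hMderiv : ∀ x : ℝ, a < x → HasDerivAt M (-(N x)) x := fun x hx =>
    hasDerivAt_tail_integral hNint (hNcont.mono (Set.Ioi_subset_Ioi (by linarith))) hx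
  have hMnonneg : ∀ u : ℝ, a ≤ u → 0 ≤ M u := by
    intro u hu
    apply setIntegral_nonneg measurableSet_Ioi
    intro x hx
    exact hNnonneg x (ha1.trans (hu.trans (le_of_lt hx)))
  have hMle : ∀ u : ℝ, a ≤ u → M u ≤ 1 / β * Fb u := by
    intro u hu
    have step : M u ≤ ∫ x in Set.Ioi u, 1 / β * h x := by
      apply setIntegral_mono_on (hNint.mono_set (Set.Ioi_subset_Ioi hu))
        ((htail u (ha1.trans hu)).1.const_mul (1 / β)) measurableSet_Ioi
      intro x hx
      exact hNle x (hu.trans (le_of_lt hx))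
    apply step.trans
    rw [MeasureTheory.integral_const_mul, (htail u (ha1.trans hu)).2]
  have hMtop : Tendsto M atTop (𝓝 0) := by
    apply squeeze_zero' (eventually_atTop.2 ⟨a, hMnonneg⟩) (eventually_atTop.2 ⟨a, hMle⟩)
    have := hFbtop.const_mul (1 / β)
    rw [mul_zero] at this
    exact this
  -- L'Hopital for part 2
  have hdiv2 : Tendsto (fun u => -(N u) / -(h u)) atTop (𝓝 (1 / β)) := by
    have h1 := part1.div_const β
    rw [show (1:ℝ) / β = 1 / β by rfl] at h1
    apply Tendsto.congr' ?_ (by simpa using h1)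
    filter_upwards [eventually_ge_atTop (1:ℝ)] with u hu
    have h0u : (0:ℝ) < u := lt_of_lt_of_le one_pos hu
    have hh : h u ≠ 0 := (hhpos u h0u).ne'
    rw [neg_div_neg_eq, hNG u, hgdef]
    show G u / (1 / β * (Real.exp (-β * u) * h u)) / β = Real.exp (β * u) * G u / h u
    rw [show -β * u = -(β * u) by ring, Real.exp_neg]
    have hE : Real.exp (β * u) ≠ 0 := (Real.exp_pos _).ne'
    field_simp
  have part2 : Tendsto (fun u => M u / Fb u) atTop (𝓝 (1 / β)) := by
    apply HasDerivAt.lhopital_zero_atTop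
      (eventually_atTop.2 ⟨a + 1, fun u hu => hMderiv u (by linarith)⟩)
      (eventually_atTop.2 ⟨1, fun u hu => by
        simpa using hFbderiv u (lt_of_lt_of_le one_pos hu)⟩)
      ?_ hMtop hFbtop hdiv2
    filter_upwards [eventually_ge_atTop (1:ℝ)] with u hu
    exact neg_ne_zero.2 (hhpos u (lt_of_lt_of_le one_pos hu)).ne'
  constructor
  · exact part1.congr (fun u => (peq u).symm)
  · apply part2.congr'
    filter_upwards [eventually_gt_atTop (0:ℝ)] with u hu
    have hPu := hPpos u hu
    have hFbu : (θ / (θ + u ^ c)) ^ ξ = Fb u := by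
      rw [Real.div_rpow hθ.le hPu.le]
      show θ ^ ξ / (θ + u ^ c) ^ ξ = θ ^ ξ * (θ + u ^ c) ^ (-ξ)
      rw [Real.rpow_neg hPu.le, div_eq_mul_inv]
    rw [← hFbu]
end
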